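/- arXiv:1608.04864 — 9 statements merged into one kernel-verified Lean document; each statement's English description precedes it below -/
import Mathlib

section
/- Let d ≥ 1, let V : ℤ^d → ℝ be a bounded sequence, and let H := Δ + V on ℓ²(ℤ^d). Suppose ψ ∈ ℓ²(ℤ^d) and E ∈ ℝ satisfy Hψ = Eψ, that E ∉ [0,4d], and that limsup_{|n|→∞} |V(n)| < dist([0,4d], E). Then there exists ν > 0 such that for every α ∈ [0, ν) one has Σ_{n∈ℤ^d} exp(2α√(1+|n|²)) |ψ(n)|² < ∞. -/
open scoped BigOperators

/-- Pointwise discrete Laplacian on `ℤ^d`: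
`(Δu)(n) = ∑_{|n-m|=1} (u(n) - u(m))`. -/
noncomputable def discreteLap (d : ℕ) (u : (Fin d → ℤ) → ℂ) (n : Fin d → ℤ) : ℂ :=
  ∑ i : Fin d,
    (2 * u n - u (Function.update n i (n i - 1)) - u (Function.update n i (n i + 1)))

lemma ct_update_add {d : ℕ} (n : Fin d → ℤ) (i : Fin d) (k : ℤ) :
    Function.update n i (n i + k) = n + Pi.single i k := by
  funext j
  rcases eq_or_ne j i with h | h
  · subst h; simp
  · simp [Function.update_of_ne h, Pi.single_eq_of_ne h]

lemma ct_update_sub {d : ℕ} (n : Fin d → ℤ) (i : Fin d) (k : ℤ) :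
    Function.update n i (n i - k) = n - Pi.single i k := by
  funext j
  rcases eq_or_ne j i with h | h
  · subst h; simp
  · simp [Function.update_of_ne h, Pi.single_eq_of_ne h]

lemma ct_sqrt_lip_one (s x y : ℝ) (hs : 0 ≤ s) :
    Real.sqrt (s + x ^ 2) ≤ Real.sqrt (s + y ^ 2) + |x - y| := by
  have hy : 0 ≤ s + y ^ 2 := by positivity
  have h2 : |y| ≤ Real.sqrt (s + y ^ 2) := by
    rw [← Real.sqrt_sq_eq_abs]
    exact Real.sqrt_le_sqrt (by nlinarith)
  have habs : |x| ≤ |y| + |x - y| := by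
    calc |x| = |y + (x - y)| := by ring_nf
    _ ≤ |y| + |x - y| := abs_add_le _ _
  have key : s + x ^ 2 ≤ (Real.sqrt (s + y ^ 2) + |x - y|) ^ 2 := by
    have hsy := Real.sq_sqrt hy
    nlinarith [mul_self_le_mul_self (abs_nonneg x) habs,
      mul_le_mul_of_nonneg_right h2 (abs_nonneg (x - y)),
      sq_abs x, sq_abs y, sq_abs (x - y)]
  calc Real.sqrt (s + x ^ 2) ≤ Real.sqrt ((Real.sqrt (s + y ^ 2) + |x - y|) ^ 2) :=
        Real.sqrt_le_sqrt key
    _ = Real.sqrt (s + y ^ 2) + |x - y| := Real.sqrt_sq (by positivity)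

lemma ct_sqrt_lip (s x y : ℝ) (hs : 0 ≤ s) :
    |Real.sqrt (s + x ^ 2) - Real.sqrt (s + y ^ 2)| ≤ |x - y| := by
  rw [abs_sub_le_iff]
  refine ⟨by linarith [ct_sqrt_lip_one s x y hs], ?_⟩
  rw [abs_sub_comm x y]
  linarith [ct_sqrt_lip_one s y x hs]

lemma ct_min_lip (a b c : ℝ) : |min a c - min b c| ≤ |a - b| := by
  have := abs_min_sub_min_le_max a c b c
  simpa using this

lemma ct_exp_sub_one (x a : ℝ) (h : |x| ≤ a) : |Real.exp x - 1| ≤ Real.exp a - 1 := by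
  rcases abs_le.1 h with ⟨h1, h2⟩
  have e1 : Real.exp x ≤ Real.exp a := Real.exp_le_exp.2 h2
  have e2 : Real.exp (-a) ≤ Real.exp x := Real.exp_le_exp.2 h1
  have e3 : Real.exp (-a) = (Real.exp a)⁻¹ := Real.exp_neg a
  have e4 : 1 ≤ Real.exp a := Real.one_le_exp (le_trans (abs_nonneg x) h)
  have e5 : 0 < Real.exp a := Real.exp_pos a
  rw [abs_le]
  constructor
  · rw [e3] at e2
    have : Real.exp a * (Real.exp a)⁻¹ = 1 := mul_inv_cancel₀ (ne_of_gt e5)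
    nlinarith
  · linarith

section Key

variable {d : ℕ} {V : (Fin d → ℤ) → ℝ} {M : ℝ} {ψ : (Fin d → ℤ) → ℂ} {E : ℝ}
  {g : (Fin d → ℤ) → ℝ} {R α : ℝ}

lemma ct_key (hM : ∀ n, |V n| ≤ M)
    (hψ : Summable fun n => ‖ψ n‖ ^ 2)
    (heig : ∀ n, discreteLap d ψ n + (V n : ℂ) * ψ n = (E : ℂ) * ψ n)
    (hgR : ∀ n, g n ≤ R)
    (hlip : ∀ n (i : Fin d), |g n - g (n + Pi.single i 1)| ≤ 1)
    (hα : 0 ≤ α) :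
    Metric.infDist E (Set.Icc (0:ℝ) (4*d)) * (∑' n, ‖(Real.exp (α * g n) : ℂ) * ψ n‖ ^ 2)
      ≤ 2*d*(Real.exp α - 1) * (∑' n, ‖(Real.exp (α * g n) : ℂ) * ψ n‖ ^ 2)
        + ∑' n, |V n| * ‖(Real.exp (α * g n) : ℂ) * ψ n‖ ^ 2 := by
  classical
  set φ : (Fin d → ℤ) → ℂ := fun n => (Real.exp (α * g n) : ℂ) * ψ n with hφdef
  set S : ℝ := ∑' n, ‖φ n‖ ^ 2 with hSdef
  -- summability of ‖φ‖²
  have hφ2 : Summable fun n => ‖φ n‖ ^ 2 := by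
    refine Summable.of_nonneg_of_le (fun n => by positivity)
      (fun n => ?_) (hψ.mul_left (Real.exp (α * R) ^ 2))
    have h1 : ‖φ n‖ = Real.exp (α * g n) * ‖ψ n‖ := by
      rw [hφdef, norm_mul, Complex.norm_real, Real.norm_eq_abs, Real.abs_exp]
    rw [h1, mul_pow]
    have : Real.exp (α * g n) ≤ Real.exp (α * R) :=
      Real.exp_le_exp.2 (mul_le_mul_of_nonneg_left (hgR n) hα)
    have h2 : Real.exp (α * g n) ^ 2 ≤ Real.exp (α * R) ^ 2 := by
      apply pow_le_pow_left₀ (le_of_lt (Real.exp_pos _)) this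
    nlinarith [sq_nonneg (‖ψ n‖), Real.exp_pos (α * g n)]
  have hφ2v : ∀ v : Fin d → ℤ, Summable fun n => ‖φ (n + v)‖ ^ 2 := fun v => by
    have := ((Equiv.addRight v).summable_iff
      (f := fun n : Fin d → ℤ => ‖φ n‖ ^ 2)).2 hφ2
    simpa [Function.comp_def] using this
  have htsv : ∀ v : Fin d → ℤ, (∑' n, ‖φ (n + v)‖ ^ 2) = S := fun v => by
    simpa using Equiv.tsum_eq (Equiv.addRight v) (fun n : Fin d → ℤ => ‖φ n‖ ^ 2)
  have hS0 : 0 ≤ S := tsum_nonneg fun n => by positivity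
  -- product summability
  have hmul : ∀ v : Fin d → ℤ, Summable (fun n => ‖φ n‖ * ‖φ (n + v)‖) := fun v => by
    refine Summable.of_nonneg_of_le (fun n => by positivity) (fun n => ?_)
      (((hφ2.add (hφ2v v))).div_const 2)
    have := two_mul_le_add_sq (‖φ n‖) (‖φ (n + v)‖)
    linarith
  have hmulS : ∀ v : Fin d → ℤ, (∑' n, ‖φ n‖ * ‖φ (n + v)‖) ≤ S := fun v => by
    have h1 : (∑' n, (‖φ n‖ ^ 2 + ‖φ (n + v)‖ ^ 2) / 2) = S := by
      rw [tsum_div_const, Summable.tsum_add hφ2 (hφ2v v), htsv v]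
      ring
    rw [← h1]
    refine Summable.tsum_le_tsum (fun n => ?_) (hmul v) ((hφ2.add (hφ2v v)).div_const 2)
    have := two_mul_le_add_sq (‖φ n‖) (‖φ (n + v)‖)
    linarith
  have hexpα : 0 ≤ Real.exp α - 1 := by linarith [Real.one_le_exp hα]
  have hφn : ∀ m, φ m = (Real.exp (α * g m) : ℂ) * ψ m := fun m => rfl
  -- shifts
  set e : Fin d → (Fin d → ℤ) := fun i => Pi.single i (1 : ℤ) with hedef
  set e' : Fin d → (Fin d → ℤ) := fun i => Pi.single i (-1 : ℤ) with he'def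
  have hcancel : ∀ (n : Fin d → ℤ) (i : Fin d), (n + e i) + e' i = n := by
    intro n i
    rw [add_assoc]
    have : e i + e' i = 0 := by
      funext j
      rcases eq_or_ne j i with h | h
      · subst h; simp [hedef, he'def]
      · simp [hedef, he'def, Pi.single_eq_of_ne h]
    rw [this, add_zero]
  have hlip' : ∀ (n : Fin d → ℤ) (i : Fin d), |g n - g (n + e' i)| ≤ 1 := by
    intro n i
    have h := hlip (n + e' i) i
    have h2 : (n + e' i) + Pi.single i (1 : ℤ) = n := by
      funext j
      rcases eq_or_ne j i with h | h
      · subst h; simp [he'def]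
      · simp [he'def, Pi.single_eq_of_ne h]
    rw [h2] at h
    rw [abs_sub_comm]
    exact h
  -- the conjugation coefficient
  set κ : (Fin d → ℤ) → (Fin d → ℤ) → ℂ :=
    fun n m => ((Real.exp (α * g n - α * g m) : ℝ) : ℂ) with hκdef
  have hsplit : ∀ n m, (Real.exp (α * g n) : ℂ) * ψ m = κ n m * φ m := by
    intro n m
    have h1 : Real.exp (α * g n - α * g m) * Real.exp (α * g m) = Real.exp (α * g n) := by
      rw [← Real.exp_add]; ring_nf
    calc (Real.exp (α * g n) : ℂ) * ψ m
        = ((Real.exp (α * g n - α * g m) * Real.exp (α * g m) : ℝ) : ℂ) * ψ m := by rw [h1]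
      _ = κ n m * φ m := by rw [hκdef, hφn m]; push_cast; ring
  have hκbound : ∀ n m, |g n - g m| ≤ 1 → ‖1 - κ n m‖ ≤ Real.exp α - 1 := by
    intro n m h
    have hx : |α * g n - α * g m| ≤ α := by
      rw [← mul_sub, abs_mul, abs_of_nonneg hα]
      calc α * |g n - g m| ≤ α * 1 := mul_le_mul_of_nonneg_left h hα
        _ = α := mul_one α
    have h2 : (1 - κ n m) = (((1 - Real.exp (α * g n - α * g m)) : ℝ) : ℂ) := by
      rw [hκdef]; push_cast; ring
    rw [h2, Complex.norm_real, Real.norm_eq_abs, abs_sub_comm]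
    exact ct_exp_sub_one _ _ hx
  -- pointwise conjugated eigenvalue equation
  set lap2 : (Fin d → ℤ) → ℂ :=
    fun n => ∑ i, (2 * φ n - φ (n + e' i) - φ (n + e i)) with hlap2def
  set err : (Fin d → ℤ) → ℂ :=
    fun n => ∑ i, ((1 - κ n (n + e' i)) * φ (n + e' i)
      + (1 - κ n (n + e i)) * φ (n + e i)) with herrdef
  have heig' : ∀ n, lap2 n + err n + (V n : ℂ) * φ n = (E : ℂ) * φ n := by
    intro n
    have hlapn : (Real.exp (α * g n) : ℂ) * discreteLap d ψ n = lap2 n + err n := by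
      rw [discreteLap, Finset.mul_sum, hlap2def, herrdef, ← Finset.sum_add_distrib]
      refine Finset.sum_congr rfl fun i _ => ?_
      have hu1 : Function.update n i (n i - 1) = n + e' i := by
        funext j
        rcases eq_or_ne j i with h | h
        · subst h; simp [he'def, sub_eq_add_neg]
        · simp [Function.update_of_ne h, he'def, Pi.single_eq_of_ne h]
      have hu2 : Function.update n i (n i + 1) = n + e i := by
        rw [ct_update_add n i 1]
      rw [hu1, hu2, mul_sub, mul_sub, hsplit n (n + e' i), hsplit n (n + e i), hφn n]
      ring
    have h0 := congrArg (fun z => (Real.exp (α * g n) : ℂ) * z) (heig n)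
    simp only [mul_add] at h0
    rw [hlapn] at h0
    have e1 : (Real.exp (α * g n) : ℂ) * ((V n : ℂ) * ψ n) = (V n : ℂ) * φ n := by
      rw [hφn n]; ring
    have e2 : (Real.exp (α * g n) : ℂ) * ((E : ℂ) * ψ n) = (E : ℂ) * φ n := by
      rw [hφn n]; ring
    rw [e1, e2] at h0
    exact h0
  -- complex summability of products
  set P : (Fin d → ℤ) → ℂ := fun n => (starRingEnd ℂ) (φ n) with hPdef
  have hPnorm : ∀ n, ‖P n‖ = ‖φ n‖ := fun n => by rw [hPdef]; exact RCLike.norm_conj _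
  have sA : Summable fun n => P n * φ n := by
    refine Summable.of_norm ?_
    have : ∀ n, ‖P n * φ n‖ = ‖φ n‖ ^ 2 := fun n => by
      rw [norm_mul, hPnorm, sq]
    rw [summable_congr this]
    exact hφ2
  have sB : ∀ v, Summable fun n => P n * φ (n + v) := by
    intro v
    refine Summable.of_norm ?_
    have : ∀ n, ‖P n * φ (n + v)‖ = ‖φ n‖ * ‖φ (n + v)‖ := fun n => by
      rw [norm_mul, hPnorm]
    rw [summable_congr this]
    exact hmul v
  -- error term summability and bound
  have sErrTermNorm : ∀ v, (∀ n, |g n - g (n + v)| ≤ 1) →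
      Summable fun n => ‖(1 - κ n (n + v)) * (P n * φ (n + v))‖ := by
    intro v hv
    refine Summable.of_nonneg_of_le (fun n => norm_nonneg _) (fun n => ?_)
      ((hmul v).mul_left (Real.exp α - 1))
    rw [norm_mul, norm_mul, hPnorm]
    calc ‖1 - κ n (n + v)‖ * (‖φ n‖ * ‖φ (n + v)‖)
        ≤ (Real.exp α - 1) * (‖φ n‖ * ‖φ (n + v)‖) := by
          apply mul_le_mul_of_nonneg_right (hκbound n (n + v) (hv n)) (by positivity)
      _ = (Real.exp α - 1) * (‖φ n‖ * ‖φ (n + v)‖) := rfl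
  have sErrTerm : ∀ v, (∀ n, |g n - g (n + v)| ≤ 1) →
      Summable fun n => (1 - κ n (n + v)) * (P n * φ (n + v)) :=
    fun v hv => Summable.of_norm (sErrTermNorm v hv)
  have hErrTermBound : ∀ v, (∀ n, |g n - g (n + v)| ≤ 1) →
      ‖∑' n, (1 - κ n (n + v)) * (P n * φ (n + v))‖ ≤ (Real.exp α - 1) * S := by
    intro v hv
    calc ‖∑' n, (1 - κ n (n + v)) * (P n * φ (n + v))‖
        ≤ ∑' n, ‖(1 - κ n (n + v)) * (P n * φ (n + v))‖ :=
          norm_tsum_le_tsum_norm (sErrTermNorm v hv)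
      _ ≤ ∑' n, (Real.exp α - 1) * (‖φ n‖ * ‖φ (n + v)‖) := by
          refine Summable.tsum_le_tsum (fun n => ?_) (sErrTermNorm v hv)
            ((hmul v).mul_left (Real.exp α - 1))
          rw [norm_mul, norm_mul, hPnorm]
          apply mul_le_mul_of_nonneg_right (hκbound n (n + v) (hv n)) (by positivity)
      _ = (Real.exp α - 1) * ∑' n, (‖φ n‖ * ‖φ (n + v)‖) := tsum_mul_left
      _ ≤ (Real.exp α - 1) * S := mul_le_mul_of_nonneg_left (hmulS v) hexpα
  -- summability of conj-φ times lap2 and err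
  have sLap : Summable fun n => P n * lap2 n := by
    have hpt : ∀ n, P n * lap2 n
        = ∑ i, (2 * (P n * φ n) - P n * φ (n + e' i) - P n * φ (n + e i)) := by
      intro n
      rw [hlap2def, Finset.mul_sum]
      exact Finset.sum_congr rfl fun i _ => by ring
    rw [summable_congr hpt]
    exact summable_sum fun i _ => ((sA.mul_left 2).sub (sB (e' i))).sub (sB (e i))
  have sErr : Summable fun n => P n * err n := by
    have hpt : ∀ n, P n * err n
        = ∑ i, ((1 - κ n (n + e' i)) * (P n * φ (n + e' i))
            + (1 - κ n (n + e i)) * (P n * φ (n + e i))) := by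
      intro n
      rw [herrdef, Finset.mul_sum]
      exact Finset.sum_congr rfl fun i _ => by ring
    rw [summable_congr hpt]
    exact summable_sum fun i _ =>
      (sErrTerm (e' i) (fun n => hlip' n i)).add (sErrTerm (e i) (fun n => hlip n i))
  -- bound on the error tsum
  have hT2bound : ‖∑' n, P n * err n‖ ≤ 2 * d * (Real.exp α - 1) * S := by
    have hpt : ∀ n, P n * err n
        = ∑ i, ((1 - κ n (n + e' i)) * (P n * φ (n + e' i))
            + (1 - κ n (n + e i)) * (P n * φ (n + e i))) := by
      intro n
      rw [herrdef, Finset.mul_sum]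
      exact Finset.sum_congr rfl fun i _ => by ring
    rw [tsum_congr hpt, Summable.tsum_finsetSum (fun i _ =>
      ((sErrTerm (e' i) (fun n => hlip' n i)).add (sErrTerm (e i) (fun n => hlip n i))))]
    calc ‖∑ i : Fin d, ∑' n, ((1 - κ n (n + e' i)) * (P n * φ (n + e' i))
            + (1 - κ n (n + e i)) * (P n * φ (n + e i)))‖
        ≤ ∑ i : Fin d, ‖∑' n, ((1 - κ n (n + e' i)) * (P n * φ (n + e' i))
            + (1 - κ n (n + e i)) * (P n * φ (n + e i)))‖ := norm_sum_le _ _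
      _ ≤ ∑ _i : Fin d, 2 * ((Real.exp α - 1) * S) := by
          refine Finset.sum_le_sum fun i _ => ?_
          rw [Summable.tsum_add (sErrTerm (e' i) (fun n => hlip' n i))
            (sErrTerm (e i) (fun n => hlip n i))]
          calc ‖(∑' n, (1 - κ n (n + e' i)) * (P n * φ (n + e' i)))
                + ∑' n, (1 - κ n (n + e i)) * (P n * φ (n + e i))‖
              ≤ ‖∑' n, (1 - κ n (n + e' i)) * (P n * φ (n + e' i))‖
                + ‖∑' n, (1 - κ n (n + e i)) * (P n * φ (n + e i))‖ := norm_add_le _ _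
            _ ≤ (Real.exp α - 1) * S + (Real.exp α - 1) * S :=
                add_le_add (hErrTermBound (e' i) (fun n => hlip' n i))
                  (hErrTermBound (e i) (fun n => hlip n i))
            _ = 2 * ((Real.exp α - 1) * S) := by ring
      _ = 2 * d * (Real.exp α - 1) * S := by
          rw [Finset.sum_const, Finset.card_univ, Fintype.card_fin]
          simp [nsmul_eq_mul]; ring
  -- Dirichlet form: per-direction identity
  have hqs : ∀ i : Fin d, Summable fun n => ‖φ n - φ (n + e i)‖ ^ 2 := by
    intro i
    refine Summable.of_nonneg_of_le (fun n => by positivity) (fun n => ?_)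
      ((hφ2.mul_left 2).add ((hφ2v (e i)).mul_left 2))
    have h1 : ‖φ n - φ (n + e i)‖ ≤ ‖φ n‖ + ‖φ (n + e i)‖ := norm_sub_le _ _
    have h2 := pow_le_pow_left₀ (norm_nonneg (φ n - φ (n + e i))) h1 2
    nlinarith [sq_nonneg (‖φ n‖ - ‖φ (n + e i)‖)]
  set q : Fin d → ℝ := fun i => ∑' n, ‖φ n - φ (n + e i)‖ ^ 2 with hqdef
  have hq0 : ∀ i, 0 ≤ q i := fun i => tsum_nonneg fun n => by positivity
  have hq4 : ∀ i, q i ≤ 4 * S := by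
    intro i
    have h1 : (∑' n, (2 * ‖φ n‖ ^ 2 + 2 * ‖φ (n + e i)‖ ^ 2)) = 4 * S := by
      rw [Summable.tsum_add (hφ2.mul_left 2) ((hφ2v (e i)).mul_left 2), tsum_mul_left, tsum_mul_left,
        htsv (e i)]
      ring
    rw [hqdef, ← h1]
    refine Summable.tsum_le_tsum (fun n => ?_) (hqs i)
      ((hφ2.mul_left 2).add ((hφ2v (e i)).mul_left 2))
    have h1 : ‖φ n - φ (n + e i)‖ ≤ ‖φ n‖ + ‖φ (n + e i)‖ := norm_sub_le _ _
    have h2 := pow_le_pow_left₀ (norm_nonneg (φ n - φ (n + e i))) h1 2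
    nlinarith [sq_nonneg (‖φ n‖ - ‖φ (n + e i)‖)]
  have hU : ∀ i : Fin d,
      (∑' n, (2 * (P n * φ n) - P n * φ (n + e' i) - P n * φ (n + e i)))
        = ((q i : ℝ) : ℂ) := by
    intro i
    have s1 : Summable fun n => P n * φ n - P n * φ (n + e i) := sA.sub (sB (e i))
    have s2 : Summable fun n => P n * φ n - P n * φ (n + e' i) := sA.sub (sB (e' i))
    have s2' : Summable fun n => P (n + e i) * φ (n + e i) - P (n + e i) * φ n := by
      have := ((Equiv.addRight (e i)).summable_iff
        (f := fun n => P n * φ n - P n * φ (n + e' i))).2 s2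
      have hcongr : ∀ n, ((fun n => P n * φ n - P n * φ (n + e' i))
          ∘ (Equiv.addRight (e i))) n = P (n + e i) * φ (n + e i) - P (n + e i) * φ n := by
        intro n
        simp only [Function.comp_apply, Equiv.coe_addRight]
        rw [hcancel n i]
      rw [summable_congr hcongr] at this
      exact this
    have hD2 : (∑' n, (P n * φ n - P n * φ (n + e' i)))
        = ∑' n, (P (n + e i) * φ (n + e i) - P (n + e i) * φ n) := by
      rw [← Equiv.tsum_eq (Equiv.addRight (e i))
        (fun n => P n * φ n - P n * φ (n + e' i))]
      refine tsum_congr fun n => ?_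
      simp only [Equiv.coe_addRight]
      rw [hcancel n i]
    calc (∑' n, (2 * (P n * φ n) - P n * φ (n + e' i) - P n * φ (n + e i)))
        = ∑' n, ((P n * φ n - P n * φ (n + e i)) + (P n * φ n - P n * φ (n + e' i))) :=
          tsum_congr fun n => by ring
      _ = (∑' n, (P n * φ n - P n * φ (n + e i)))
          + ∑' n, (P n * φ n - P n * φ (n + e' i)) := Summable.tsum_add s1 s2
      _ = (∑' n, (P n * φ n - P n * φ (n + e i)))
          + ∑' n, (P (n + e i) * φ (n + e i) - P (n + e i) * φ n) := by rw [hD2]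
      _ = ∑' n, ((P n * φ n - P n * φ (n + e i))
          + (P (n + e i) * φ (n + e i) - P (n + e i) * φ n)) := (Summable.tsum_add s1 s2').symm
      _ = ∑' n, ((starRingEnd ℂ) (φ n - φ (n + e i)) * (φ n - φ (n + e i))) := by
          refine tsum_congr fun n => ?_
          rw [hPdef]
          simp only [map_sub]
          ring
      _ = ∑' n, ((‖φ n - φ (n + e i)‖ ^ 2 : ℝ) : ℂ) := by
          refine tsum_congr fun n => ?_
          rw [RCLike.conj_mul]
          norm_cast
      _ = ((q i : ℝ) : ℂ) := by rw [hqdef, Complex.ofReal_tsum]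
  -- potential sums
  set W : ℝ := ∑' n, V n * ‖φ n‖ ^ 2 with hWdef
  have sWnorm : Summable fun n => ‖V n * ‖φ n‖ ^ 2‖ := by
    refine Summable.of_nonneg_of_le (fun n => norm_nonneg _) (fun n => ?_) (hφ2.mul_left M)
    rw [Real.norm_eq_abs, abs_mul, abs_of_nonneg (by positivity : (0:ℝ) ≤ ‖φ n‖ ^ 2)]
    exact mul_le_mul_of_nonneg_right (hM n) (by positivity)
  have sW : Summable fun n => V n * ‖φ n‖ ^ 2 := Summable.of_norm sWnorm
  have sVabs : Summable fun n => |V n| * ‖φ n‖ ^ 2 :=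
    Summable.of_nonneg_of_le (fun n => by positivity)
      (fun n => mul_le_mul_of_nonneg_right (hM n) (by positivity)) (hφ2.mul_left M)
  have hPφ : ∀ n, P n * φ n = ((‖φ n‖ ^ 2 : ℝ) : ℂ) := fun n => by
    rw [hPdef, RCLike.conj_mul]; norm_cast
  have sT3 : Summable fun n => (V n : ℂ) * (P n * φ n) := by
    refine Summable.of_norm ?_
    refine Summable.of_nonneg_of_le (fun n => norm_nonneg _) (fun n => ?_) (hφ2.mul_left M)
    rw [norm_mul, hPφ n, Complex.norm_real, Real.norm_eq_abs, Complex.norm_real,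
      Real.norm_eq_abs, abs_of_nonneg (by positivity : (0:ℝ) ≤ ‖φ n‖ ^ 2)]
    exact mul_le_mul_of_nonneg_right (hM n) (by positivity)
  have hT3 : (∑' n, (V n : ℂ) * (P n * φ n)) = ((W : ℝ) : ℂ) := by
    rw [hWdef, Complex.ofReal_tsum]
    refine tsum_congr fun n => ?_
    rw [hPφ n]; push_cast; ring
  have hSsum : (∑' n, P n * φ n) = ((S : ℝ) : ℂ) := by
    rw [hSdef, Complex.ofReal_tsum]
    exact tsum_congr fun n => hPφ n
  have hT4 : (∑' n, (E : ℂ) * (P n * φ n)) = ((E * S : ℝ) : ℂ) := by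
    rw [tsum_mul_left, hSsum]; push_cast; ring
  -- Dirichlet form total
  set Q : ℝ := ∑ i, q i with hQdef
  have hQ0 : 0 ≤ Q := Finset.sum_nonneg fun i _ => hq0 i
  have hQ4 : Q ≤ 4 * d * S := by
    calc Q ≤ ∑ _i : Fin d, 4 * S := Finset.sum_le_sum fun i _ => hq4 i
      _ = 4 * d * S := by
        rw [Finset.sum_const, Finset.card_univ, Fintype.card_fin]
        simp [nsmul_eq_mul]; ring
  have hT1 : (∑' n, P n * lap2 n) = ((Q : ℝ) : ℂ) := by
    have hpt : ∀ n, P n * lap2 n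
        = ∑ i, (2 * (P n * φ n) - P n * φ (n + e' i) - P n * φ (n + e i)) := by
      intro n
      rw [hlap2def, Finset.mul_sum]
      exact Finset.sum_congr rfl fun i _ => by ring
    rw [tsum_congr hpt,
      Summable.tsum_finsetSum (fun i _ => ((sA.mul_left 2).sub (sB (e' i))).sub (sB (e i)))]
    have hc : ((Q : ℝ) : ℂ) = ∑ i, ((q i : ℝ) : ℂ) := by rw [hQdef]; push_cast; rfl
    rw [hc]
    exact Finset.sum_congr rfl fun i _ => hU i
  -- the main identity
  have hident : ((Q : ℝ) : ℂ) + (∑' n, P n * err n) + ((W : ℝ) : ℂ) = ((E * S : ℝ) : ℂ) := by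
    rw [← hT1, ← hT3, ← hT4]
    calc (∑' n, P n * lap2 n) + (∑' n, P n * err n) + (∑' n, (V n : ℂ) * (P n * φ n))
        = ∑' n, (P n * lap2 n + P n * err n + (V n : ℂ) * (P n * φ n)) := by
          rw [Summable.tsum_add (sLap.add sErr) sT3, Summable.tsum_add sLap sErr]
      _ = ∑' n, (E : ℂ) * (P n * φ n) :=
          tsum_congr fun n => by linear_combination (P n) * heig' n
  have hT2eq : (∑' n, P n * err n) = ((E * S - Q - W : ℝ) : ℂ) := by
    push_cast at hident ⊢
    linear_combination hident
  have habs : |E * S - Q - W| ≤ 2 * d * (Real.exp α - 1) * S := by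
    have h1 : ‖((E * S - Q - W : ℝ) : ℂ)‖ = |E * S - Q - W| := by
      rw [Complex.norm_real, Real.norm_eq_abs]
    rw [← h1, ← hT2eq]
    exact hT2bound
  have hWbound : |W| ≤ ∑' n, |V n| * ‖φ n‖ ^ 2 := by
    calc |W| ≤ ∑' n, ‖V n * ‖φ n‖ ^ 2‖ := by
          rw [hWdef, ← Real.norm_eq_abs]
          exact norm_tsum_le_tsum_norm sWnorm
      _ = ∑' n, |V n| * ‖φ n‖ ^ 2 := tsum_congr fun n => by
          rw [Real.norm_eq_abs, abs_mul, abs_of_nonneg (by positivity : (0:ℝ) ≤ ‖φ n‖ ^ 2)]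
  have hdistS : Metric.infDist E (Set.Icc (0:ℝ) (4*d)) * S ≤ |E * S - Q| := by
    rcases eq_or_lt_of_le hS0 with h0 | h0
    · have hQ0' : Q = 0 := by
        refine le_antisymm ?_ hQ0
        rw [← h0] at hQ4
        linarith
      rw [← h0, hQ0']
      simp
    · have hmem : Q / S ∈ Set.Icc (0:ℝ) (4*(d:ℝ)) :=
        ⟨div_nonneg hQ0 (le_of_lt h0), by rw [div_le_iff₀ h0]; linarith⟩
      have h1 : Metric.infDist E (Set.Icc (0:ℝ) (4*(d:ℝ))) ≤ |E - Q/S| := by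
        have := Metric.infDist_le_dist_of_mem (x := E) hmem
        rwa [Real.dist_eq] at this
      calc Metric.infDist E (Set.Icc (0:ℝ) (4*(d:ℝ))) * S ≤ |E - Q/S| * S :=
            mul_le_mul_of_nonneg_right h1 hS0
        _ = |(E - Q/S) * S| := by rw [abs_mul, abs_of_pos h0]
        _ = |E * S - Q| := by
            congr 1
            field_simp
  calc Metric.infDist E (Set.Icc (0:ℝ) (4*d)) * S ≤ |E * S - Q| := hdistS
    _ ≤ |E * S - Q - W| + |W| := by
        have h2 : |E * S - Q| = |(E * S - Q - W) + W| := by congr 1; ring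
        rw [h2]
        exact abs_add_le _ _
    _ ≤ 2 * d * (Real.exp α - 1) * S + ∑' n, |V n| * ‖φ n‖ ^ 2 := add_le_add habs hWbound

end Key


/-- **Combes–Thomas estimate** (Theorem 1.1). If `Hψ = Eψ` with `E` outside `[0,4d]`
and `limsup_{|n|→∞} |V(n)| < dist([0,4d], E)`, then `ψ` decays exponentially: there is
`ν > 0` such that `∑ exp(2α√(1+|n|²)) |ψ(n)|² < ∞` for all `α ∈ [0, ν)`. -/
theorem combes_thomas (d : ℕ) (hd : 1 ≤ d) (V : (Fin d → ℤ) → ℝ)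
    (hVbdd : ∃ M : ℝ, ∀ n, |V n| ≤ M)
    (ψ : (Fin d → ℤ) → ℂ) (E : ℝ)
    (hψ : Summable fun n => ‖ψ n‖ ^ 2)
    (heig : ∀ n, discreteLap d ψ n + (V n : ℂ) * ψ n = (E : ℂ) * ψ n)
    (hE : E ∉ Set.Icc (0 : ℝ) (4 * d))
    (hlimsup : Filter.limsup (fun n => |V n|) Filter.cofinite
      < Metric.infDist E (Set.Icc (0 : ℝ) (4 * d))) :
    ∃ ν > (0 : ℝ), ∀ α ∈ Set.Ico (0 : ℝ) ν,
      Summable fun n : Fin d → ℤ =>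
        Real.exp (2 * α * Real.sqrt (1 + ∑ i, ((n i : ℝ)) ^ 2)) * ‖ψ n‖ ^ 2 := by
  classical
  obtain ⟨M, hM⟩ := hVbdd
  haveI : Nonempty (Fin d) := ⟨⟨0, hd⟩⟩
  have hM0 : 0 ≤ M := le_trans (abs_nonneg _) (hM fun _ => 0)
  set D : ℝ := Metric.infDist E (Set.Icc (0 : ℝ) (4 * d)) with hDdef
  set t : ℝ := (Filter.limsup (fun n => |V n|) Filter.cofinite + D) / 2 with htdef
  have ht1 : Filter.limsup (fun n => |V n|) Filter.cofinite < t := by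
    rw [htdef]; linarith
  have ht2 : t < D := by rw [htdef]; linarith
  have hbdd : Filter.IsBoundedUnder (· ≤ ·) Filter.cofinite (fun n => |V n|) :=
    Filter.isBoundedUnder_of ⟨M, hM⟩
  have hev : ∀ᶠ n in Filter.cofinite, |V n| < t :=
    Filter.eventually_lt_of_limsup_lt ht1 hbdd
  have hKfin : {n : Fin d → ℤ | ¬ |V n| < t}.Finite := by
    rwa [Filter.eventually_cofinite] at hev
  set K : Finset (Fin d → ℤ) := hKfin.toFinset with hKdef
  have hKmem : ∀ n, n ∉ K → |V n| < t := by
    intro n hn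
    rw [hKdef, Set.Finite.mem_toFinset] at hn
    simpa using not_not.1 hn
  have ht0 : 0 < t := by
    obtain ⟨n, hn⟩ := Infinite.exists_notMem_finset K
    exact lt_of_le_of_lt (abs_nonneg (V n)) (hKmem n hn)
  have hd0 : (0 : ℝ) < d := by
    have : (1 : ℝ) ≤ d := by exact_mod_cast hd
    linarith
  have hDt : 0 < D - t := by linarith
  have harg : (1 : ℝ) < 1 + (D - t) / (2 * d) := by
    have : 0 < (D - t) / (2 * d) := div_pos hDt (by linarith)
    linarith
  refine ⟨Real.log (1 + (D - t) / (2 * d)), Real.log_pos harg, ?_⟩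
  rintro α ⟨hα0, hαν⟩
  -- the smallness of the conjugation error
  have hexpα : Real.exp α < 1 + (D - t) / (2 * d) := by
    have h1 := Real.exp_lt_exp.2 hαν
    rwa [Real.exp_log (by linarith)] at h1
  have hδ : 0 < D - t - 2 * d * (Real.exp α - 1) := by
    have h1 : 2 * d * (Real.exp α - 1) < 2 * d * ((D - t) / (2 * d)) := by
      apply mul_lt_mul_of_pos_left _ (by linarith : (0:ℝ) < 2 * d)
      linarith
    have h2 : 2 * (d:ℝ) * ((D - t) / (2 * d)) = D - t := by field_simp
    linarith
  set δ : ℝ := D - t - 2 * d * (Real.exp α - 1) with hδdef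
  set f : (Fin d → ℤ) → ℝ := fun n => Real.sqrt (1 + ∑ i, ((n i : ℝ)) ^ 2) with hfdef
  -- Lipschitz property of f over edges
  have hflip : ∀ (n : Fin d → ℤ) (i : Fin d), |f n - f (n + Pi.single i 1)| ≤ 1 := by
    intro n i
    set m : Fin d → ℤ := n + Pi.single i 1 with hmdef
    set s : ℝ := 1 + ∑ j ∈ Finset.univ.erase i, ((n j : ℝ)) ^ 2 with hsdef
    have hs0 : 0 ≤ s := by rw [hsdef]; positivity
    have h1 : f n = Real.sqrt (s + ((n i : ℝ)) ^ 2) := by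
      have h : (∑ j ∈ Finset.univ.erase i, ((n j : ℝ)) ^ 2) + ((n i : ℝ)) ^ 2
          = ∑ j, ((n j : ℝ)) ^ 2 := Finset.sum_erase_add _ _ (Finset.mem_univ i)
      show Real.sqrt (1 + ∑ j, ((n j : ℝ)) ^ 2) = Real.sqrt (s + ((n i : ℝ)) ^ 2)
      rw [hsdef]
      congr 1
      linarith
    have h2 : f m = Real.sqrt (s + ((n i : ℝ) + 1) ^ 2) := by
      have h : (∑ j ∈ Finset.univ.erase i, ((m j : ℝ)) ^ 2) + ((m i : ℝ)) ^ 2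
          = ∑ j, ((m j : ℝ)) ^ 2 := Finset.sum_erase_add _ _ (Finset.mem_univ i)
      have herase : ∑ j ∈ Finset.univ.erase i, ((m j : ℝ)) ^ 2
          = ∑ j ∈ Finset.univ.erase i, ((n j : ℝ)) ^ 2 := by
        refine Finset.sum_congr rfl fun j hj => ?_
        have hji : j ≠ i := Finset.ne_of_mem_erase hj
        rw [hmdef]
        simp [Pi.single_eq_of_ne hji]
      have hi : ((m i : ℤ) : ℝ) = (n i : ℝ) + 1 := by
        rw [hmdef]
        push_cast
        simp
      rw [herase, hi] at h
      show Real.sqrt (1 + ∑ j, ((m j : ℝ)) ^ 2) = Real.sqrt (s + ((n i : ℝ) + 1) ^ 2)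
      rw [hsdef]
      congr 1
      linarith
    rw [h1, h2]
    have h3 := ct_sqrt_lip s ((n i : ℝ)) ((n i : ℝ) + 1) hs0
    simpa using h3
  -- norms of weighted terms
  have hnormφ : ∀ (x : ℝ) (z : ℂ), ‖(Real.exp x : ℂ) * z‖ ^ 2 = Real.exp (2 * x) * ‖z‖ ^ 2 := by
    intro x z
    rw [norm_mul, Complex.norm_real, Real.norm_eq_abs, Real.abs_exp, mul_pow]
    congr 1
    rw [sq, ← Real.exp_add]
    ring_nf
  -- the constant
  set C : ℝ := ∑ n ∈ K, M * (Real.exp (2 * α * f n) * ‖ψ n‖ ^ 2) with hCdef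
  have hC0 : 0 ≤ C := Finset.sum_nonneg fun n _ => by positivity
  -- the uniform estimate over truncated weights
  have hbound : ∀ R : ℝ,
      δ * (∑' n, ‖(Real.exp (α * min (f n) R) : ℂ) * ψ n‖ ^ 2) ≤ C := by
    intro R
    set g : (Fin d → ℤ) → ℝ := fun n => min (f n) R with hgdef
    set φ : (Fin d → ℤ) → ℂ := fun n => (Real.exp (α * g n) : ℂ) * ψ n with hφdef
    have hglip : ∀ (n : Fin d → ℤ) (i : Fin d), |g n - g (n + Pi.single i 1)| ≤ 1 := by
      intro n i
      exact le_trans (ct_min_lip (f n) (f (n + Pi.single i 1)) R) (hflip n i)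
    have hgR : ∀ n, g n ≤ R := fun n => min_le_right _ _
    have hkey := ct_key hM hψ heig hgR hglip hα0
    have hφ2 : Summable fun n => ‖φ n‖ ^ 2 := by
      refine Summable.of_nonneg_of_le (fun n => by positivity) (fun n => ?_)
        (hψ.mul_left (Real.exp (2 * (α * R))))
      rw [hφdef, hnormφ]
      refine mul_le_mul_of_nonneg_right ?_ (by positivity)
      refine Real.exp_le_exp.2 ?_
      have := mul_le_mul_of_nonneg_left (hgR n) hα0
      linarith
    set S : ℝ := ∑' n, ‖φ n‖ ^ 2 with hSdef
    have hS0 : 0 ≤ S := tsum_nonneg fun n => by positivity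
    -- split the potential term
    have hVφ : Summable fun n => |V n| * ‖φ n‖ ^ 2 :=
      Summable.of_nonneg_of_le (fun n => by positivity)
        (fun n => mul_le_mul_of_nonneg_right (hM n) (by positivity)) (hφ2.mul_left M)
    have hif : Summable fun n =>
        (if n ∈ K then M * (Real.exp (2 * α * f n) * ‖ψ n‖ ^ 2) else 0) :=
      summable_of_ne_finset_zero (s := K) fun n hn => if_neg hn
    have hsplit : (∑' n, |V n| * ‖φ n‖ ^ 2) ≤ t * S + C := by
      have hpt : ∀ n, |V n| * ‖φ n‖ ^ 2
          ≤ t * ‖φ n‖ ^ 2 + (if n ∈ K then M * (Real.exp (2 * α * f n) * ‖ψ n‖ ^ 2) else 0) := by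
        intro n
        by_cases hn : n ∈ K
        · rw [if_pos hn]
          have h1 : |V n| * ‖φ n‖ ^ 2 ≤ M * ‖φ n‖ ^ 2 :=
            mul_le_mul_of_nonneg_right (hM n) (by positivity)
          have h2 : ‖φ n‖ ^ 2 ≤ Real.exp (2 * α * f n) * ‖ψ n‖ ^ 2 := by
            rw [hφdef, hnormφ]
            refine mul_le_mul_of_nonneg_right ?_ (by positivity)
            refine Real.exp_le_exp.2 ?_
            have h3 : g n ≤ f n := min_le_left _ _
            have := mul_le_mul_of_nonneg_left h3 hα0
            linarith
          have h4 : 0 ≤ t * ‖φ n‖ ^ 2 := by positivity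
          nlinarith [mul_le_mul_of_nonneg_left h2 hM0]
        · rw [if_neg hn, add_zero]
          exact mul_le_mul_of_nonneg_right (le_of_lt (hKmem n hn)) (by positivity)
      calc (∑' n, |V n| * ‖φ n‖ ^ 2)
          ≤ ∑' n, (t * ‖φ n‖ ^ 2
              + (if n ∈ K then M * (Real.exp (2 * α * f n) * ‖ψ n‖ ^ 2) else 0)) :=
            Summable.tsum_le_tsum hpt hVφ ((hφ2.mul_left t).add hif)
        _ = t * S + C := by
            rw [Summable.tsum_add (hφ2.mul_left t) hif, tsum_mul_left, hCdef,
              tsum_eq_sum (s := K) (fun n hn => if_neg hn)]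
            congr 1
            exact Finset.sum_congr rfl fun n hn => if_pos hn
    -- combine
    have hfinal : D * S ≤ 2 * d * (Real.exp α - 1) * S + (t * S + C) :=
      le_trans hkey (by linarith)
    rw [hδdef]
    nlinarith
  -- conclude by monotone convergence over finite sets
  have hsum : Summable fun n : Fin d → ℤ => Real.exp (2 * α * f n) * ‖ψ n‖ ^ 2 := by
    refine summable_of_sum_le (c := C / δ) (fun n => by positivity) ?_
    intro F
    rcases F.eq_empty_or_nonempty with hF | hF
    · rw [hF, Finset.sum_empty]
      positivity
    · set R : ℝ := F.sup' hF f with hRdef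
      have hFR : ∀ n ∈ F, min (f n) R = f n := by
        intro n hn
        exact min_eq_left (Finset.le_sup' f hn)
      have h1 : ∑ n ∈ F, Real.exp (2 * α * f n) * ‖ψ n‖ ^ 2
          = ∑ n ∈ F, ‖(Real.exp (α * min (f n) R) : ℂ) * ψ n‖ ^ 2 := by
        refine Finset.sum_congr rfl fun n hn => ?_
        rw [hnormφ, hFR n hn]
        ring_nf
      have hφ2 : Summable fun n => ‖(Real.exp (α * min (f n) R) : ℂ) * ψ n‖ ^ 2 := by
        refine Summable.of_nonneg_of_le (fun n => by positivity) (fun n => ?_)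
          (hψ.mul_left (Real.exp (2 * (α * R))))
        rw [hnormφ]
        refine mul_le_mul_of_nonneg_right ?_ (by positivity)
        refine Real.exp_le_exp.2 ?_
        have := mul_le_mul_of_nonneg_left (min_le_right (f n) R) hα0
        linarith
      have h2 : ∑ n ∈ F, ‖(Real.exp (α * min (f n) R) : ℂ) * ψ n‖ ^ 2
          ≤ ∑' n, ‖(Real.exp (α * min (f n) R) : ℂ) * ψ n‖ ^ 2 :=
        Summable.sum_le_tsum F (fun n _ => by positivity) hφ2
      have h3 := hbound R
      rw [h1]
      calc ∑ n ∈ F, ‖(Real.exp (α * min (f n) R) : ℂ) * ψ n‖ ^ 2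
          ≤ ∑' n, ‖(Real.exp (α * min (f n) R) : ℂ) * ψ n‖ ^ 2 := h2
        _ ≤ C / δ := by
            rw [le_div_iff₀ hδ]
            linarith [h3]
  simpa only [hfdef] using hsum
end

section
/- Let d = 1 and let V : ℤ → ℝ be bounded with sup_{n∈ℤ} |n| |V(n) − V(n−1)| < ∞ and V(n) → 0 as |n| → ∞. Let H := Δ + V on ℓ²(ℤ). Suppose ψ ∈ ℓ²(ℤ) and E ∈ ℝ satisfy Hψ = Eψ, and suppose that for every α ≥ 0 one has Σ_{n∈ℤ} exp(2α√(1+n²)) |ψ(n)|² < ∞. Then ψ = 0. -/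
/-- Second part of Theorem 1.2 (d = 1): if `V` is bounded, satisfies Hypothesis 1
(`sup |n||V(n) − V(n−1)| < ∞`) and Hypothesis 2 (`V(n) → 0`), and if `ψ ∈ ℓ²(ℤ)` is an
eigenfunction of `H = Δ + V` that lies in `D(θ_α)` for every `α ≥ 0`, then `ψ = 0`. -/
theorem eigenfunction_with_all_exponential_decay_is_zero
    (V : ℤ → ℝ) (hVbdd : ∃ M : ℝ, ∀ n, |V n| ≤ M)
    (hV1 : ∃ C : ℝ, ∀ n : ℤ, |(n : ℝ)| * |V n - V (n - 1)| ≤ C)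
    (hV0 : Filter.Tendsto V Filter.cofinite (nhds 0))
    (ψ : ℤ → ℂ) (E : ℝ)
    (hψ : Summable fun n => ‖ψ n‖ ^ 2)
    (heig : ∀ n : ℤ, (2 * ψ n - ψ (n + 1) - ψ (n - 1)) + (V n : ℂ) * ψ n = (E : ℂ) * ψ n)
    (hdecay : ∀ α : ℝ, 0 ≤ α →
      Summable fun n : ℤ => Real.exp (2 * α * Real.sqrt (1 + (n : ℝ) ^ 2)) * ‖ψ n‖ ^ 2) :
    ψ = 0 := by
  obtain ⟨M, hM⟩ := hVbdd
  have hM0 : 0 ≤ M := le_trans (abs_nonneg _) (hM 0)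
  set K : ℝ := 2 + M + |E| with hKdef
  have hK0 : 0 ≤ K := by positivity
  have hK1 : (1:ℝ) ≤ K + 1 := by linarith
  -- recurrence bound
  have hrec : ∀ n : ℤ, ‖ψ (n - 1)‖ ≤ K * ‖ψ n‖ + ‖ψ (n + 1)‖ := by
    intro n
    have h1 : ψ (n - 1) = ((2 + V n - E : ℝ) : ℂ) * ψ n - ψ (n + 1) := by
      push_cast
      linear_combination -heig n
    calc ‖ψ (n - 1)‖ = ‖((2 + V n - E : ℝ) : ℂ) * ψ n - ψ (n + 1)‖ := by rw [h1]
      _ ≤ ‖((2 + V n - E : ℝ) : ℂ) * ψ n‖ + ‖ψ (n + 1)‖ := norm_sub_le _ _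
      _ ≤ K * ‖ψ n‖ + ‖ψ (n + 1)‖ := by
          gcongr
          rw [norm_mul, Complex.norm_real, Real.norm_eq_abs]
          have := hM n
          have habs : |2 + V n - E| ≤ 2 + |V n| + |E| := by
            calc |2 + V n - E| ≤ |2 + V n| + |E| := abs_sub _ _
              _ ≤ |(2:ℝ)| + |V n| + |E| := by gcongr; exact abs_add_le _ _
              _ = 2 + |V n| + |E| := by norm_num
          have : ‖ψ n‖ * |2 + V n - E| ≤ ‖ψ n‖ * K := by
            apply mul_le_mul_of_nonneg_left _ (norm_nonneg _)
            calc |2 + V n - E| ≤ 2 + |V n| + |E| := habs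
              _ ≤ K := by rw [hKdef]; linarith
          linarith [this, mul_comm ‖ψ n‖ |2 + V n - E|, mul_comm ‖ψ n‖ K]
  -- step bound
  have hstep : ∀ m : ℤ, ‖ψ m‖ + ‖ψ (m + 1)‖ ≤ (K + 1) * (‖ψ (m + 1)‖ + ‖ψ (m + 2)‖) := by
    intro m
    have h := hrec (m + 1)
    have e1 : m + 1 - 1 = m := by ring
    have e2 : m + 1 + 1 = m + 2 := by ring
    rw [e1, e2] at h
    nlinarith [norm_nonneg (ψ (m+1)), norm_nonneg (ψ (m+2))]
  -- iterated bound
  have hiter : ∀ k : ℕ, ∀ m : ℤ,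
      ‖ψ m‖ + ‖ψ (m + 1)‖ ≤ (K + 1) ^ k * (‖ψ (m + k)‖ + ‖ψ (m + k + 1)‖) := by
    intro k
    induction k with
    | zero => intro m; simp
    | succ k ih =>
      intro m
      have h1 := hstep m
      have h2 := ih (m + 1)
      have e1 : m + 1 + (k:ℤ) = m + (k + 1 : ℕ) := by push_cast; ring
      rw [e1] at h2
      calc ‖ψ m‖ + ‖ψ (m + 1)‖ ≤ (K + 1) * (‖ψ (m + 1)‖ + ‖ψ (m + 1 + 1)‖) := by
            have : m + 2 = m + 1 + 1 := by ring
            rwa [this] at h1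
        _ ≤ (K + 1) * ((K + 1) ^ k * (‖ψ (m + (k+1:ℕ))‖ + ‖ψ (m + (k+1:ℕ) + 1)‖)) := by
            apply mul_le_mul_of_nonneg_left _ (by linarith)
            have : m + 1 + 1 = m + 1 + (1:ℤ) := rfl
            exact h2
        _ = (K + 1) ^ (k+1) * (‖ψ (m + (k+1:ℕ))‖ + ‖ψ (m + (k+1:ℕ) + 1)‖) := by ring
  -- decay bound at α
  set α : ℝ := Real.log (K + 1) + 1 with hαdef
  have hlog0 : 0 ≤ Real.log (K + 1) := Real.log_nonneg hK1
  have hα0 : 0 ≤ α := by linarith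
  have hsum := hdecay α hα0
  set S : ℝ := ∑' n : ℤ, Real.exp (2 * α * Real.sqrt (1 + (n : ℝ) ^ 2)) * ‖ψ n‖ ^ 2 with hSdef
  have hS0 : 0 ≤ S := tsum_nonneg (fun n => by positivity)
  have hterm : ∀ n : ℤ, Real.exp (2 * α * Real.sqrt (1 + (n : ℝ) ^ 2)) * ‖ψ n‖ ^ 2 ≤ S :=
    fun n => Summable.le_tsum hsum n (fun i _ => by positivity)
  -- pointwise bound: for n ≥ 0, ‖ψ n‖ ≤ √S * exp(-α n)
  have hpt : ∀ n : ℤ, 0 ≤ n → ‖ψ n‖ ≤ Real.sqrt S * Real.exp (-(α * n)) := by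
    intro n hn
    have hsqrt : (n:ℝ) ≤ Real.sqrt (1 + (n : ℝ) ^ 2) := by
      have : (n:ℝ) ≤ |(n:ℝ)| := le_abs_self _
      calc (n:ℝ) ≤ |(n:ℝ)| := this
        _ = Real.sqrt ((n:ℝ)^2) := (Real.sqrt_sq_eq_abs _).symm
        _ ≤ Real.sqrt (1 + (n:ℝ)^2) := Real.sqrt_le_sqrt (by linarith)
    have h1 : ‖ψ n‖ ^ 2 ≤ S * Real.exp (-(2 * α * (n:ℝ))) := by
      have h2 := hterm n
      have h3 : Real.exp (2 * α * (n:ℝ)) ≤ Real.exp (2 * α * Real.sqrt (1 + (n : ℝ) ^ 2)) := by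
        apply Real.exp_le_exp.mpr
        have h2α : 0 ≤ 2 * α := by linarith
        exact mul_le_mul_of_nonneg_left hsqrt h2α
      have h4 : Real.exp (2 * α * (n:ℝ)) * ‖ψ n‖ ^ 2 ≤ S := by
        calc Real.exp (2 * α * (n:ℝ)) * ‖ψ n‖ ^ 2
            ≤ Real.exp (2 * α * Real.sqrt (1 + (n : ℝ) ^ 2)) * ‖ψ n‖ ^ 2 := by
              apply mul_le_mul_of_nonneg_right h3 (by positivity)
          _ ≤ S := h2
      have h5 : ‖ψ n‖ ^ 2 ≤ S / Real.exp (2 * α * (n:ℝ)) := by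
        rw [le_div_iff₀ (Real.exp_pos _)]
        linarith [h4, mul_comm (‖ψ n‖ ^ 2) (Real.exp (2 * α * (n:ℝ)))]
      calc ‖ψ n‖ ^ 2 ≤ S / Real.exp (2 * α * (n:ℝ)) := h5
        _ = S * Real.exp (-(2 * α * (n:ℝ))) := by rw [Real.exp_neg]; ring
    have hRHS : (Real.sqrt S * Real.exp (-(α * n))) ^ 2 = S * Real.exp (-(2 * α * (n:ℝ))) := by
      rw [mul_pow, Real.sq_sqrt hS0, ← Real.exp_nat_mul]
      ring_nf
    have := Real.sqrt_le_sqrt (h1.trans_eq hRHS.symm)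
    rwa [Real.sqrt_sq (norm_nonneg _), Real.sqrt_sq (by positivity)] at this
  -- key identity: (K+1) * exp(-α) = exp(-1)
  have hkey : (K + 1) * Real.exp (-α) = Real.exp (-1) := by
    rw [hαdef, neg_add, Real.exp_add, ← mul_assoc, Real.exp_neg, Real.exp_log (by linarith)]
    field_simp
  -- conclude ψ m = 0 for every m
  have hzero : ∀ m : ℤ, ‖ψ m‖ + ‖ψ (m + 1)‖ ≤ 0 := by
    intro m
    set C : ℝ := 2 * Real.sqrt S * Real.exp (-(α * m)) with hCdef
    have hC0 : 0 ≤ C := by positivity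
    have hbound : ∀ k : ℕ, ((-m).toNat ≤ k) →
        ‖ψ m‖ + ‖ψ (m + 1)‖ ≤ C * Real.exp (-1) ^ k := by
      intro k hk
      have hmk : 0 ≤ m + (k:ℤ) := by
        omega
      have h1 := hiter k m
      have h2 := hpt (m + k) hmk
      have h3 := hpt (m + k + 1) (by omega)
      have hexple : Real.exp (-(α * ((m:ℝ) + k + 1))) ≤ Real.exp (-(α * ((m:ℝ) + k))) := by
        apply Real.exp_le_exp.mpr
        nlinarith
      have hcast1 : ((m + (k:ℤ) : ℤ) : ℝ) = (m:ℝ) + k := by push_cast; ring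
      have hcast2 : ((m + (k:ℤ) + 1 : ℤ) : ℝ) = (m:ℝ) + k + 1 := by push_cast; ring
      rw [hcast1] at h2
      rw [hcast2] at h3
      calc ‖ψ m‖ + ‖ψ (m + 1)‖
          ≤ (K + 1) ^ k * (‖ψ (m + k)‖ + ‖ψ (m + k + 1)‖) := h1
        _ ≤ (K + 1) ^ k * (2 * Real.sqrt S * Real.exp (-(α * ((m:ℝ) + k)))) := by
            apply mul_le_mul_of_nonneg_left _ (by positivity)
            calc ‖ψ (m + k)‖ + ‖ψ (m + k + 1)‖
                ≤ Real.sqrt S * Real.exp (-(α * ((m:ℝ) + k)))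
                  + Real.sqrt S * Real.exp (-(α * ((m:ℝ) + k + 1))) := add_le_add h2 h3
              _ ≤ 2 * Real.sqrt S * Real.exp (-(α * ((m:ℝ) + k))) := by
                  nlinarith [Real.sqrt_nonneg S, hexple, Real.exp_pos (-(α * ((m:ℝ) + k)))]
        _ = C * ((K + 1) * Real.exp (-α)) ^ k := by
            rw [hCdef, mul_pow, ← Real.exp_nat_mul]
            rw [show -(α * ((m:ℝ) + k)) = -(α * m) + (k : ℕ) * (-α) by push_cast; ring,
              Real.exp_add]
            ring
        _ = C * Real.exp (-1) ^ k := by rw [hkey]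
    have htend : Filter.Tendsto (fun k : ℕ => C * Real.exp (-1) ^ k) Filter.atTop (nhds 0) := by
      have h0 : Filter.Tendsto (fun k : ℕ => Real.exp (-1) ^ k) Filter.atTop (nhds 0) := by
        apply tendsto_pow_atTop_nhds_zero_of_lt_one (Real.exp_pos _).le
        rw [Real.exp_lt_one_iff]; norm_num
      simpa using h0.const_mul C
    exact ge_of_tendsto htend (Filter.eventually_atTop.mpr ⟨(-m).toNat, hbound⟩)
  funext m
  have h := hzero m
  have h1 : ‖ψ m‖ = 0 := le_antisymm (by nlinarith [norm_nonneg (ψ m), norm_nonneg (ψ (m+1))]) (norm_nonneg _)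
  simpa using norm_eq_zero.mp h1
end

section
/- Let d = 1 and let V : ℤ → ℝ satisfy lim_{|n|→∞} |n| |V(n) − V(n−1)| = 0 and lim_{|n|→∞} V(n) = 0. Then H := Δ + V has no eigenvalues in (0,4): for every E ∈ (0,4) and every ψ ∈ ℓ²(ℤ) with Hψ = Eψ, one has ψ = 0. -/
private lemma band_key (a a' x x' y y' z z' : ℝ) (hx : x = a*y - z) (hx' : x' = a*y' - z') :
    (x^2+x'^2+y^2+y'^2 - a*(x*y + x'*y')) - (y^2+y'^2+z^2+z'^2 - a'*(y*z+y'*z'))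
      = (a' - a)*(y*z + y'*z') := by
  subst hx hx'; ring

private lemma band_pos (δ a x x' y y' : ℝ) (ha : |a| ≤ 2 - δ) :
    (δ/2)*(x^2+x'^2+y^2+y'^2) ≤ x^2+x'^2+y^2+y'^2 - a*(x*y+x'*y') := by
  rcases abs_cases a with ⟨h1,h2⟩|⟨h1,h2⟩ <;>
  nlinarith [sq_nonneg (x-y), sq_nonneg (x+y), sq_nonneg (x'-y'), sq_nonneg (x'+y')]

private lemma band_upper (a x x' y y' : ℝ) (ha : |a| ≤ 2) :
    x^2+x'^2+y^2+y'^2 - a*(x*y+x'*y') ≤ 2*(x^2+x'^2+y^2+y'^2) := by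
  rcases abs_cases a with ⟨h1,h2⟩|⟨h1,h2⟩ <;>
  nlinarith [sq_nonneg (x-y), sq_nonneg (x+y), sq_nonneg (x'-y'), sq_nonneg (x'+y')]

set_option maxHeartbeats 1000000

/-- Theorem 1.4: if `|n||V(n) − V(n−1)| → 0` and `V(n) → 0` as `|n| → ∞`, then the
one-dimensional discrete Schrödinger operator `H = Δ + V` has no eigenvalues in `(0,4)`. -/
theorem no_eigenvalues_in_band
    (V : ℤ → ℝ)
    (hV1 : Filter.Tendsto (fun n : ℤ => |(n : ℝ)| * |V n - V (n - 1)|)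
      Filter.cofinite (nhds 0))
    (hV0 : Filter.Tendsto V Filter.cofinite (nhds 0))
    (E : ℝ) (hE : E ∈ Set.Ioo (0 : ℝ) 4)
    (ψ : ℤ → ℂ) (hψ : Summable fun n => ‖ψ n‖ ^ 2)
    (heig : ∀ n : ℤ, (2 * ψ n - ψ (n + 1) - ψ (n - 1)) + (V n : ℂ) * ψ n = (E : ℂ) * ψ n) :
    ψ = 0 := by
  classical
  obtain ⟨hE0, hE4⟩ := hE
  by_contra hne
  obtain ⟨m, hmne⟩ : ∃ m, ψ m ≠ 0 := by
    by_contra h; push_neg at h; exact hne (funext h)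
  set a : ℤ → ℝ := fun n => 2 - E + V n with ha
  have recC : ∀ n : ℤ, ψ (n+1) = ((a n : ℝ) : ℂ) * ψ n - ψ (n-1) := by
    intro n
    have h := heig n
    simp only [ha]
    push_cast
    linear_combination -h
  have recu : ∀ n : ℤ, (ψ (n+1)).re = a n * (ψ n).re - (ψ (n-1)).re := by
    intro n
    have := congrArg Complex.re (recC n)
    simpa [Complex.sub_re, Complex.mul_re, Complex.ofReal_re, Complex.ofReal_im] using this
  have recv : ∀ n : ℤ, (ψ (n+1)).im = a n * (ψ n).im - (ψ (n-1)).im := by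
    intro n
    have := congrArg Complex.im (recC n)
    simpa [Complex.sub_im, Complex.mul_im, Complex.ofReal_re, Complex.ofReal_im] using this
  set g : ℤ → ℝ := fun n =>
    (ψ (n+1)).re^2 + (ψ (n+1)).im^2 + (ψ n).re^2 + (ψ n).im^2
      - a n * ((ψ (n+1)).re * (ψ n).re + (ψ (n+1)).im * (ψ n).im) with hg
  set Sq : ℤ → ℝ := fun n =>
    (ψ (n+1)).re^2 + (ψ (n+1)).im^2 + (ψ n).re^2 + (ψ n).im^2 with hSq
  have hSqnorm : ∀ n : ℤ, Sq n = ‖ψ (n+1)‖^2 + ‖ψ n‖^2 := by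
    intro n
    have h1 : ∀ z : ℂ, ‖z‖^2 = z.re^2 + z.im^2 := by
      intro z; rw [Complex.sq_norm, Complex.normSq_apply]; ring
    rw [hSq, h1, h1]; ring
  have keyid : ∀ n : ℤ, g n - g (n-1)
      = (V (n-1) - V n) * ((ψ n).re * (ψ (n-1)).re + (ψ n).im * (ψ (n-1)).im) := by
    intro n
    have hkey := band_key (a n) (a (n-1)) (ψ (n+1)).re (ψ (n+1)).im (ψ n).re (ψ n).im
      (ψ (n-1)).re (ψ (n-1)).im (recu n) (recv n)
    have hn1 : n - 1 + 1 = n := by ring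
    have haa : a (n-1) - a n = V (n-1) - V n := by simp [ha]
    calc g n - g (n-1)
        = (a (n-1) - a n) * ((ψ n).re * (ψ (n-1)).re + (ψ n).im * (ψ (n-1)).im) := by
          simp only [hg, hn1]; exact hkey
      _ = (V (n-1) - V n) * ((ψ n).re * (ψ (n-1)).re + (ψ n).im * (ψ (n-1)).im) := by
          rw [haa]
  -- constants
  have habsE : |2 - E| < 2 := abs_lt.mpr ⟨by linarith, by linarith⟩
  set δ : ℝ := (2 - |2-E|)/2 with hδdef
  have hδ0 : 0 < δ := by
    have := habsE; simp only [hδdef]; linarith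
  set c : ℝ := δ/2 with hcdef
  have hc0 : 0 < c := by simp only [hcdef]; linarith
  -- choosing N
  have hev : ∀ᶠ n : ℤ in Filter.cofinite,
      |V n| ≤ δ ∧ |(n:ℝ)| * |V n - V (n-1)| ≤ c := by
    have h1 := Metric.tendsto_nhds.mp hV0 δ hδ0
    have h2 := Metric.tendsto_nhds.mp hV1 c hc0
    filter_upwards [h1, h2] with n hn1 hn2
    rw [Real.dist_eq, sub_zero] at hn1 hn2
    refine ⟨le_of_lt hn1, ?_⟩
    have hnn : (0:ℝ) ≤ |(n:ℝ)| * |V n - V (n-1)| := by positivity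
    rw [abs_of_nonneg hnn] at hn2
    exact le_of_lt hn2
  obtain ⟨B, hB⟩ := (Filter.eventually_cofinite.mp hev).bddAbove
  set N : ℤ := max (B+1) 1 with hNdef
  have hN1 : 1 ≤ N := le_max_right _ _
  have hNgood : ∀ n : ℤ, N ≤ n → |V n| ≤ δ ∧ |(n:ℝ)| * |V n - V (n-1)| ≤ c := by
    intro n hn
    by_contra hcon
    have hmem : n ∈ {x : ℤ | ¬ (|V x| ≤ δ ∧ |(x:ℝ)| * |V x - V (x-1)| ≤ c)} := hcon
    have h1 : n ≤ B := hB hmem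
    have h2 : B + 1 ≤ N := le_max_left _ _
    omega
  have ha_le : ∀ n : ℤ, N ≤ n → |a n| ≤ 2 - δ := by
    intro n hn
    have h1 : |V n| ≤ δ := (hNgood n hn).1
    have h2 : |a n| ≤ |2 - E| + |V n| := by
      simp only [ha]; exact abs_add_le _ _
    have h3 : |2 - E| = 2 - 2*δ := by simp only [hδdef]; ring
    calc |a n| ≤ |2 - E| + |V n| := h2
      _ ≤ (2 - 2*δ) + δ := by rw [h3] at *; linarith
      _ = 2 - δ := by ring
  have hpos : ∀ n : ℤ, N ≤ n → c * Sq n ≤ g n := by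
    intro n hn
    have := band_pos δ (a n) (ψ (n+1)).re (ψ (n+1)).im (ψ n).re (ψ n).im (ha_le n hn)
    simp only [hg, hSq, hcdef]
    linarith [this]
  have hSqnn : ∀ n : ℤ, 0 ≤ Sq n := by
    intro n; simp only [hSq]; positivity
  have hgnn : ∀ n : ℤ, N ≤ n → 0 ≤ g n := by
    intro n hn
    have := hpos n hn
    nlinarith [hSqnn n]
  have hupper : ∀ n : ℤ, N ≤ n → g n ≤ 2 * Sq n := by
    intro n hn
    have hle : |a n| ≤ 2 := le_trans (ha_le n hn) (by linarith)
    have := band_upper (a n) (ψ (n+1)).re (ψ (n+1)).im (ψ n).re (ψ n).im hle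
    simp only [hg, hSq]
    linarith [this]
  clear_value g Sq c δ a N
  -- Gronwall step
  have hstep : ∀ n : ℤ, N < n → g (n-1) * (1 - 1/(2*(n:ℝ))) ≤ g n := by
    intro n hn
    have hnN : N ≤ n := le_of_lt hn
    have hn0 : (0:ℝ) < (n:ℝ) := by
      have : (1:ℤ) ≤ n := le_trans hN1 hnN
      exact_mod_cast lt_of_lt_of_le zero_lt_one this
    have hΔV : |V n - V (n-1)| ≤ c / (n:ℝ) := by
      have h := (hNgood n hnN).2
      rw [abs_of_pos hn0] at h
      rw [le_div_iff₀ hn0]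
      linarith [h]
    set R : ℝ := (ψ n).re * (ψ (n-1)).re + (ψ n).im * (ψ (n-1)).im with hR
    have hRabs : |R| ≤ Sq (n-1) / 2 := by
      have hn1 : n - 1 + 1 = n := by ring
      have hSqv : Sq (n-1) = (ψ n).re^2 + (ψ n).im^2 + (ψ (n-1)).re^2 + (ψ (n-1)).im^2 := by
        simp only [hSq, hn1]
      rw [hSqv]
      rw [abs_le]
      constructor <;>
        nlinarith [sq_nonneg ((ψ n).re + (ψ (n-1)).re), sq_nonneg ((ψ n).re - (ψ (n-1)).re),
          sq_nonneg ((ψ n).im + (ψ (n-1)).im), sq_nonneg ((ψ n).im - (ψ (n-1)).im)]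
    have hSg : Sq (n-1) ≤ g (n-1) / c := by
      rw [le_div_iff₀ hc0]
      have := hpos (n-1) (by omega)
      linarith [this]
    have hkey := keyid n
    have h1 : -( (c/(n:ℝ)) * (g (n-1) / (2*c)) ) ≤ (V (n-1) - V n) * R := by
      have a1 : |(V (n-1) - V n) * R| ≤ (c/(n:ℝ)) * (g (n-1) / (2*c)) := by
        rw [abs_mul]
        have e1 : |V (n-1) - V n| ≤ c/(n:ℝ) := by rw [abs_sub_comm]; exact hΔV
        have e2 : |R| ≤ g (n-1) / (2*c) := by
          have : Sq (n-1) / 2 ≤ g (n-1) / (2*c) := by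
            rw [div_le_div_iff₀ (by norm_num) (by positivity)]
            have := hSg
            rw [le_div_iff₀ hc0] at this
            linarith [this]
          linarith [hRabs]
        exact mul_le_mul e1 e2 (abs_nonneg _) (by positivity)
      exact le_trans (neg_le_neg a1) (neg_abs_le _)
    have heq : (c/(n:ℝ)) * (g (n-1) / (2*c)) = g (n-1) * (1/(2*(n:ℝ))) := by
      field_simp
    rw [← hR] at hkey
    rw [heq] at h1
    have hgn : g n = g (n-1) + (V (n-1) - V n) * R := by linarith [hkey]
    have expand : g (n-1) * (1 - 1/(2*(n:ℝ))) = g (n-1) - g (n-1) * (1/(2*(n:ℝ))) := by ring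
    rw [hgn, expand]
    linarith [h1]
  -- ψ not both zero at N, N+1
  have hnotzero : ψ N ≠ 0 ∨ ψ (N+1) ≠ 0 := by
    by_contra hz
    push_neg at hz
    obtain ⟨hz1, hz2⟩ := hz
    have hall : ∀ j : ℤ, ψ (N + j) = 0 ∧ ψ (N + j + 1) = 0 := by
      intro j
      induction j using Int.induction_on with
      | zero =>
        refine ⟨?_, ?_⟩
        · simpa using hz1
        · simpa using hz2
      | succ i ih =>
        refine ⟨?_, ?_⟩
        · rw [show N + ((i:ℤ) + 1) = N + (i:ℤ) + 1 from by ring]; exact ih.2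
        · have hr := recC (N + (i:ℤ) + 1)
          rw [show N + ((i:ℤ)+1) + 1 = (N + (i:ℤ) + 1) + 1 from by ring, hr,
            show (N + (i:ℤ) + 1) - 1 = N + (i:ℤ) from by ring, ih.1, ih.2]
          simp
      | pred i ih =>
        refine ⟨?_, ?_⟩
        · have hr := recC (N + -(i:ℤ))
          have hback : ψ (N + -(i:ℤ) - 1)
              = ((a (N + -(i:ℤ)) : ℝ) : ℂ) * ψ (N + -(i:ℤ)) - ψ (N + -(i:ℤ) + 1) := by
            linear_combination hr
          rw [show N + (-(i:ℤ) - 1) = N + -(i:ℤ) - 1 from by ring, hback, ih.1, ih.2]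
          simp
        · rw [show N + (-(i:ℤ) - 1) + 1 = N + -(i:ℤ) from by ring]; exact ih.1
    have := (hall (m - N)).1
    rw [show N + (m - N) = m from by ring] at this
    exact hmne this
  have hgN : 0 < g N := by
    have hp := hpos N le_rfl
    have hSqN : 0 < Sq N := by
      rw [hSqnorm]
      rcases hnotzero with h | h
      · have h' : 0 < ‖ψ N‖ := norm_pos_iff.mpr h
        have : 0 < ‖ψ N‖^2 := pow_pos h' 2
        nlinarith [sq_nonneg ‖ψ (N+1)‖, this]
      · have h' : 0 < ‖ψ (N+1)‖ := norm_pos_iff.mpr h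
        have : 0 < ‖ψ (N+1)‖^2 := pow_pos h' 2
        nlinarith [sq_nonneg ‖ψ N‖, this]
    nlinarith [hp, hSqN, hc0]
  -- main induction: g (N+j) ≥ g N * N / (N + j)
  have hNr1 : (1:ℝ) ≤ (N:ℝ) := by exact_mod_cast hN1
  have hlow : ∀ j : ℕ, g N * (N:ℝ) / ((N:ℝ) + j) ≤ g (N + (j:ℤ)) := by
    intro j
    induction j with
    | zero =>
      simp only [Nat.cast_zero, add_zero, Int.cast_zero]
      rw [mul_div_assoc, div_self (by linarith : (N:ℝ) ≠ 0), mul_one]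
    | succ j ih =>
      set t : ℝ := (N:ℝ) + j with ht
      have ht1 : 1 ≤ t := by
        have : (0:ℝ) ≤ j := Nat.cast_nonneg j
        simp only [ht]; linarith
      have hnlt : N < N + ((j:ℤ) + 1) := by omega
      have hs := hstep (N + ((j:ℤ) + 1)) hnlt
      rw [show N + ((j:ℤ) + 1) - 1 = N + (j:ℤ) from by ring] at hs
      have hcast : ((N + ((j:ℤ) + 1) : ℤ) : ℝ) = t + 1 := by push_cast [ht]; ring
      rw [hcast] at hs
      have hfac : 0 ≤ 1 - 1/(2*(t+1)) := by
        have h2 : (2:ℝ) ≤ 2*(t+1) := by linarith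
        have := one_div_le_one_div_of_le (by norm_num : (0:ℝ) < 2) h2
        linarith
      have step1 : g N * (N:ℝ) / t * (1 - 1/(2*(t+1))) ≤ g (N + (j:ℤ)) * (1 - 1/(2*(t+1))) :=
        mul_le_mul_of_nonneg_right ih hfac
      have step2 : g N * (N:ℝ) / (t+1) ≤ g N * (N:ℝ) / t * (1 - 1/(2*(t+1))) := by
        have hA : 0 ≤ g N * (N:ℝ) := by nlinarith [hgN]
        have ht0 : (0:ℝ) < t := by linarith
        have ht10 : (0:ℝ) < t + 1 := by linarith
        rw [div_mul_eq_mul_div, div_le_div_iff₀ ht10 ht0]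
        have he : g N * (N:ℝ) * (1 - 1/(2*(t+1))) * (t+1) = g N * (N:ℝ) * (t + 1/2) := by
          field_simp
          ring
        rw [he]
        have := mul_le_mul_of_nonneg_left (by linarith : t ≤ t + 1/2) hA
        linarith [this]
      have e2 : (N:ℝ) + ((j+1:ℕ):ℝ) = t + 1 := by push_cast [ht]; ring
      have e1 : N + (((j+1:ℕ)):ℤ) = N + ((j:ℤ)+1) := by push_cast; ring
      rw [e1, e2]
      linarith [step1, step2, hs]
  -- summability contradiction
  set C : ℝ := g N * (N:ℝ) / 2 with hC
  have hC0 : 0 < C := by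
    rw [hC]
    exact div_pos (mul_pos hgN (by linarith)) two_pos
  have hlb : ∀ k : ℕ, C / ((N:ℝ) + k) ≤ ‖ψ (N + (k:ℤ) + 1)‖^2 + ‖ψ (N + (k:ℤ))‖^2 := by
    intro k
    have h1 := hlow k
    have h2 := hupper (N + (k:ℤ)) (by omega)
    rw [hSqnorm] at h2
    have heq : C / ((N:ℝ) + k) = (g N * (N:ℝ) / ((N:ℝ) + k)) / 2 := by
      simp only [hC]; ring
    rw [heq]
    linarith [h1, h2]
  have hsum2 : Summable (fun k : ℕ => ‖ψ (N + (k:ℤ) + 1)‖^2 + ‖ψ (N + (k:ℤ))‖^2) := by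
    have i1 : Summable ((fun n : ℤ => ‖ψ n‖^2) ∘ (fun k : ℕ => N + (k:ℤ) + 1)) :=
      hψ.comp_injective (by intro x y h; simp only at h; omega)
    have i2 : Summable ((fun n : ℤ => ‖ψ n‖^2) ∘ (fun k : ℕ => N + (k:ℤ))) :=
      hψ.comp_injective (by intro x y h; simp only at h; omega)
    simpa [Function.comp] using i1.add i2
  have hsumC : Summable (fun k : ℕ => C / ((N:ℝ) + k)) := by
    refine Summable.of_nonneg_of_le (fun k => ?_) (fun k => hlb k) hsum2
    have : (0:ℝ) < (N:ℝ) + k := by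
      have : (0:ℝ) ≤ (k:ℝ) := Nat.cast_nonneg k
      linarith
    positivity
  -- derive contradiction with harmonic series
  set Nn : ℕ := N.toNat with hNn
  have hNncast : ((Nn:ℕ) : ℝ) = (N:ℝ) := by
    rw [hNn]
    exact_mod_cast congrArg (fun z : ℤ => (z : ℝ)) (Int.toNat_of_nonneg (by omega : (0:ℤ) ≤ N))
  have hsumC' : Summable (fun k : ℕ => C / ((k + Nn : ℕ) : ℝ)) := by
    apply hsumC.congr
    intro k
    congr 1
    push_cast
    rw [hNncast]
    ring
  have hsumf : Summable (fun n : ℕ => C / (n:ℝ)) := by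
    exact (summable_nat_add_iff Nn).mp hsumC'
  have hsum1 : Summable (fun n : ℕ => 1 / (n:ℝ)) := by
    have := hsumf.mul_left C⁻¹
    refine this.congr ?_
    intro n
    rw [div_eq_mul_inv, ← mul_assoc, inv_mul_cancel₀ (ne_of_gt hC0), one_mul, one_div]
  exact Real.not_summable_one_div_natCast hsum1
end

section
/- Let d = 1, let q, k ∈ ℝ and let b > a > 0. Define the Wigner–von Neumann potential W : ℤ → ℝ by W(n) := q·sin(k|n|^a)/|n|^b for n ≠ 0 and W(0) := 0. Then Δ + W has no eigenvalues in (0,4): for every E ∈ (0,4) and every ψ ∈ ℓ²(ℤ) with (Δ + W)ψ = Eψ, one has ψ = 0. -/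
open Real Filter Complex


lemma wvn_bv (q k a b : ℝ) (ha : 0 < a) (hab : a < b) (n : ℕ) (hn : 1 ≤ n) :
    |q * Real.sin (k * ((n : ℝ) + 1) ^ a) * ((n : ℝ) + 1) ^ (-b)
      - q * Real.sin (k * (n : ℝ) ^ a) * (n : ℝ) ^ (-b)|
      ≤ (|q| * (|k| * a + b)) * (n : ℝ) ^ (a - b - 1) := by
  have hb : 0 < b := lt_trans ha hab
  have hn1 : (1 : ℝ) ≤ (n : ℝ) := by exact_mod_cast hn
  have hn0 : (0 : ℝ) < (n : ℝ) := by linarith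
  set s : Set ℝ := Set.Icc (n : ℝ) ((n : ℝ) + 1) with hs
  set f : ℝ → ℝ := fun x => q * (Real.sin (k * x ^ a) * x ^ (-b)) with hf
  set f' : ℝ → ℝ := fun x =>
    q * (Real.cos (k * x ^ a) * (k * (a * x ^ (a - 1))) * x ^ (-b)
      + Real.sin (k * x ^ a) * (-b * x ^ (-b - 1))) with hf'
  have hderiv : ∀ x ∈ s, HasDerivWithinAt f (f' x) s x := by
    intro x hx
    have hx1 : (1 : ℝ) ≤ x := le_trans hn1 hx.1
    have hx0 : x ≠ 0 := by positivity
    have h1 : HasDerivAt (fun x : ℝ => x ^ a) (a * x ^ (a - 1)) x :=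
      Real.hasDerivAt_rpow_const (Or.inl hx0)
    have h2 : HasDerivAt (fun x : ℝ => k * x ^ a) (k * (a * x ^ (a - 1))) x :=
      h1.const_mul k
    have h3 : HasDerivAt (fun x : ℝ => Real.sin (k * x ^ a))
        (Real.cos (k * x ^ a) * (k * (a * x ^ (a - 1)))) x :=
      (Real.hasDerivAt_sin _).comp x h2
    have h4 : HasDerivAt (fun x : ℝ => x ^ (-b)) (-b * x ^ (-b - 1)) x :=
      Real.hasDerivAt_rpow_const (Or.inl hx0)
    have h5 := (h3.mul h4).const_mul q
    exact h5.hasDerivWithinAt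
  have hbound : ∀ x ∈ s, ‖f' x‖ ≤ (|q| * (|k| * a + b)) * (n : ℝ) ^ (a - b - 1) := by
    intro x hx
    have hx1 : (1 : ℝ) ≤ x := le_trans hn1 hx.1
    have hx0 : (0 : ℝ) < x := by linarith
    have e1 : x ^ (a - 1) * x ^ (-b) = x ^ (a - b - 1) := by
      rw [← Real.rpow_add hx0]; ring_nf
    have e2 : x ^ (-b - 1) ≤ x ^ (a - b - 1) :=
      Real.rpow_le_rpow_of_exponent_le hx1 (by linarith)
    have e3 : x ^ (a - b - 1) ≤ (n : ℝ) ^ (a - b - 1) :=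
      Real.rpow_le_rpow_of_nonpos hn0 hx.1 (by linarith)
    have hxpos : (0:ℝ) ≤ x ^ (a - b - 1) := (Real.rpow_pos_of_pos hx0 _).le
    have hcos : |Real.cos (k * x ^ a)| ≤ 1 := Real.abs_cos_le_one _
    have hsin : |Real.sin (k * x ^ a)| ≤ 1 := Real.abs_sin_le_one _
    have hterm1 : |Real.cos (k * x ^ a) * (k * (a * x ^ (a - 1))) * x ^ (-b)|
        ≤ |k| * a * x ^ (a - b - 1) := by
      rw [abs_mul, abs_mul, abs_mul, abs_mul]
      have hxa : |x ^ (a-1)| = x ^ (a-1) := abs_of_nonneg (Real.rpow_pos_of_pos hx0 _).le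
      have hxb : |x ^ (-b)| = x ^ (-b) := abs_of_nonneg (Real.rpow_pos_of_pos hx0 _).le
      rw [hxa, hxb, abs_of_pos ha]
      calc |Real.cos (k * x ^ a)| * (|k| * (a * x ^ (a-1))) * x ^ (-b)
          ≤ 1 * (|k| * (a * x ^ (a-1))) * x ^ (-b) := by
            apply mul_le_mul_of_nonneg_right (mul_le_mul_of_nonneg_right hcos (by positivity)) (Real.rpow_pos_of_pos hx0 _).le
        _ = |k| * a * (x ^ (a-1) * x ^ (-b)) := by ring
        _ = |k| * a * x ^ (a - b - 1) := by rw [e1]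
    have hterm2 : |Real.sin (k * x ^ a) * (-b * x ^ (-b - 1))|
        ≤ b * x ^ (a - b - 1) := by
      rw [abs_mul, abs_mul, abs_neg, abs_of_pos hb]
      have hxb : |x ^ (-b-1)| = x ^ (-b-1) := abs_of_nonneg (Real.rpow_pos_of_pos hx0 _).le
      rw [hxb]
      calc |Real.sin (k * x ^ a)| * (b * x ^ (-b-1))
          ≤ 1 * (b * x ^ (-b-1)) := by
            apply mul_le_mul_of_nonneg_right hsin (by positivity)
        _ = b * x ^ (-b-1) := by ring
        _ ≤ b * x ^ (a - b - 1) := by nlinarith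
    have : ‖f' x‖ = |q| * |Real.cos (k * x ^ a) * (k * (a * x ^ (a - 1))) * x ^ (-b)
      + Real.sin (k * x ^ a) * (-b * x ^ (-b - 1))| := by
      rw [hf']; simp [abs_mul]
    rw [this]
    calc |q| * |_ + _| ≤ |q| * (|k| * a * x ^ (a-b-1) + b * x ^ (a-b-1)) := by
          apply mul_le_mul_of_nonneg_left _ (abs_nonneg q)
          exact le_trans (abs_add_le _ _) (add_le_add hterm1 hterm2)
      _ = |q| * (|k| * a + b) * x ^ (a-b-1) := by ring
      _ ≤ |q| * (|k| * a + b) * (n:ℝ) ^ (a-b-1) := by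
          apply mul_le_mul_of_nonneg_left e3 (by positivity)
  have := Convex.norm_image_sub_le_of_norm_hasDerivWithin_le hderiv hbound
    (convex_Icc _ _) (Set.left_mem_Icc.2 (by linarith)) (Set.right_mem_Icc.2 (by linarith))
  have h6 : ‖((n:ℝ)+1) - (n:ℝ)‖ = 1 := by norm_num
  rw [h6, mul_one] at this
  calc |q * Real.sin (k * ((n : ℝ) + 1) ^ a) * ((n : ℝ) + 1) ^ (-b)
      - q * Real.sin (k * (n : ℝ) ^ a) * (n : ℝ) ^ (-b)|
      = ‖f ((n:ℝ)+1) - f (n:ℝ)‖ := by rw [hf, Real.norm_eq_abs]; ring_nf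
    _ ≤ _ := this

lemma wvn_alg (x y : ℂ) (c : ℝ) :
    Complex.normSq y + Complex.normSq ((c:ℂ)*y - x)
      - c * ((starRingEnd ℂ) y * ((c:ℂ)*y - x)).re
    = Complex.normSq x + Complex.normSq y - c * ((starRingEnd ℂ) x * y).re := by
  simp only [Complex.normSq_apply, Complex.mul_re, Complex.mul_im, Complex.sub_re,
    Complex.sub_im, Complex.conj_re, Complex.conj_im, Complex.ofReal_re, Complex.ofReal_im]
  ring

lemma wvn_R (x y : ℂ) :
    |((starRingEnd ℂ) x * y).re| ≤ (Complex.normSq x + Complex.normSq y)/2 := by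
  have h1 : |((starRingEnd ℂ) x * y).re| ≤ ‖(starRingEnd ℂ) x * y‖ :=
    Complex.abs_re_le_norm _
  rw [norm_mul, Complex.norm_conj] at h1
  nlinarith [Complex.sq_norm x, Complex.sq_norm y, sq_nonneg (‖x‖ - ‖y‖),
    norm_nonneg x, norm_nonneg y]

lemma wvn_zero (c : ℤ → ℂ) (ψ : ℤ → ℂ)
    (rec : ∀ n : ℤ, ψ (n+1) = c n * ψ n - ψ (n-1))
    (n : ℤ) (h0 : ψ n = 0) (h1 : ψ (n+1) = 0) : ∀ m, ψ m = 0 := by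
  have up : ∀ m, n ≤ m → (ψ m = 0 ∧ ψ (m+1) = 0) := by
    intro m hm
    refine Int.le_induction (motive := fun m _ => ψ m = 0 ∧ ψ (m+1) = 0) ⟨h0, h1⟩ ?_ m hm
    rintro p hp ⟨a1, a2⟩
    refine ⟨a2, ?_⟩
    have hr := rec (p+1)
    rw [show p+1-1 = p by ring, a1, a2] at hr
    simpa using hr
  have down : ∀ m, m ≤ n → (ψ m = 0 ∧ ψ (m+1) = 0) := by
    intro m hm
    refine Int.le_induction_down (motive := fun m _ => ψ m = 0 ∧ ψ (m+1) = 0) ⟨h0, h1⟩ ?_ m hm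
    rintro p hp ⟨a1, a2⟩
    have hr := rec p
    rw [a1, a2] at hr
    constructor
    · simpa [eq_comm] using hr
    · rw [show p - 1 + 1 = p by ring]; exact a1
  intro m
  rcases le_total n m with hc | hc
  · exact (up m hc).1
  · exact (down m hc).1

set_option maxHeartbeats 1000000 in
/-- Proposition 1.5: for the Wigner–von Neumann potential
`W(n) = q sin(k|n|^a)/|n|^b` with `b > a > 0`, the operator `Δ + W` has no
eigenvalues in `(0,4)`. -/
theorem wigner_von_neumann_no_eigenvalues
    (q k a b : ℝ) (ha : 0 < a) (hab : a < b)
    (W : ℤ → ℝ) (hW0 : W 0 = 0)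
    (hW : ∀ n : ℤ, n ≠ 0 → W n = q * Real.sin (k * |(n : ℝ)| ^ a) / |(n : ℝ)| ^ b)
    (E : ℝ) (hE : E ∈ Set.Ioo (0 : ℝ) 4)
    (ψ : ℤ → ℂ) (hψ : Summable fun n => ‖ψ n‖ ^ 2)
    (heig : ∀ n : ℤ, (2 * ψ n - ψ (n + 1) - ψ (n - 1)) + (W n : ℂ) * ψ n = (E : ℂ) * ψ n) :
    ψ = 0 := by
  have hb : 0 < b := lt_trans ha hab
  by_contra hne
  rw [funext_iff] at hne
  push_neg at hne
  obtain ⟨n0, hn0⟩ := hne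
  simp only [Pi.zero_apply] at hn0
  have hrec : ∀ n : ℤ, ψ (n+1) = ((2 - E + W n : ℝ) : ℂ) * ψ n - ψ (n-1) := by
    intro n
    push_cast
    linear_combination - heig n
  set ε : ℝ := (2 - |2 - E|) / 2 with hεdef
  have habsE : |2 - E| < 2 := by
    rw [abs_lt]; constructor <;> [linarith [hE.2]; linarith [hE.1]]
  have hε : 0 < ε := by rw [hεdef]; linarith
  have hε1 : ε ≤ 1 := by rw [hεdef]; have := abs_nonneg (2-E); linarith
  set C : ℝ := |q| * (|k| * a + b) with hCdef
  have hC : 0 ≤ C := by positivity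
  set h : ℕ → ℝ := fun j => C * (j:ℝ) ^ (a - b - 1) with hhdef
  have hhnn : ∀ j, 0 ≤ h j := fun j => mul_nonneg hC (Real.rpow_nonneg (Nat.cast_nonneg j) _)
  have hsum : Summable h := (Real.summable_nat_rpow.2 (by linarith)).mul_left C
  clear_value ε C h
  have ev1 : ∀ᶠ N : ℕ in atTop, |q| * (N:ℝ) ^ (-b) ≤ ε := by
    have t1 : Tendsto (fun N : ℕ => |q| * (N:ℝ) ^ (-b)) atTop (nhds 0) := by
      have := ((tendsto_rpow_neg_atTop hb).comp
        (tendsto_natCast_atTop_atTop (R := ℝ))).const_mul |q|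
      simpa using this
    exact (t1.eventually (gt_mem_nhds hε)).mono fun N hN => le_of_lt hN
  have ev2 : ∀ᶠ N : ℕ in atTop, (∑' j : ℕ, h (j + N)) ≤ ε / 2 := by
    have t2 := tendsto_sum_nat_add h
    exact (t2.eventually (gt_mem_nhds (by positivity : (0:ℝ) < ε/2))).mono
      fun N hN => le_of_lt hN
  obtain ⟨N, hN1, hNW, hNs⟩ :
      ∃ N : ℕ, 1 ≤ N ∧ |q| * (N:ℝ) ^ (-b) ≤ ε ∧ (∑' j : ℕ, h (j + N)) ≤ ε / 2 :=
    ((eventually_ge_atTop 1).and (ev1.and ev2)).exists.imp fun N ⟨h1, h2, h3⟩ => ⟨h1, h2, h3⟩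
  have hN1R : (1:ℝ) ≤ (N:ℝ) := by exact_mod_cast hN1
  have hWsmall : ∀ m : ℤ, (N:ℤ) ≤ m → |W m| ≤ ε := by
    intro m hm
    have hm1 : (1:ℝ) ≤ (m:ℝ) := by
      have : (1:ℤ) ≤ m := le_trans (by exact_mod_cast hN1) hm
      exact_mod_cast this
    have hmne : m ≠ 0 := by
      intro hmz; rw [hmz] at hm1; norm_num at hm1
    rw [hW m hmne, abs_of_pos (by linarith : (0:ℝ) < (m:ℝ))]
    have hp : (0:ℝ) < (m:ℝ) ^ b := Real.rpow_pos_of_pos (by linarith) b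
    have h1 : |q * Real.sin (k * (m:ℝ) ^ a) / (m:ℝ) ^ b| ≤ |q| / (m:ℝ) ^ b := by
      rw [abs_div, abs_of_pos hp, abs_mul]
      apply div_le_div_of_nonneg_right ?_ hp.le
      · have := Real.abs_sin_le_one (k * (m:ℝ) ^ a)
        nlinarith [abs_nonneg q]
    have h2 : |q| / (m:ℝ) ^ b = |q| * (m:ℝ) ^ (-b) := by
      rw [Real.rpow_neg (by linarith : (0:ℝ) ≤ (m:ℝ))]; ring
    have h3 : (m:ℝ) ^ (-b) ≤ (N:ℝ) ^ (-b) := by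
      apply Real.rpow_le_rpow_of_nonpos (by linarith) ?_ (by linarith)
      exact_mod_cast hm
    have h4 := mul_le_mul_of_nonneg_left h3 (abs_nonneg q)
    linarith [h1, h2 ▸ h1]
  have hWeq : ∀ n : ℕ, 1 ≤ n → W (n:ℤ) = q * Real.sin (k * (n:ℝ) ^ a) * (n:ℝ) ^ (-b) := by
    intro n hn
    have hnR : (1:ℝ) ≤ (n:ℝ) := by exact_mod_cast hn
    have hn0 : ((n:ℤ)) ≠ 0 := by
      intro hz
      rw [show n = 0 by exact_mod_cast hz] at hn
      exact absurd hn (by norm_num)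
    rw [hW _ hn0]
    push_cast
    rw [abs_of_pos (by linarith : (0:ℝ) < (n:ℝ)), Real.rpow_neg (by linarith : (0:ℝ) ≤ (n:ℝ))]
    ring
  set u : ℕ → ℂ := fun m => ψ ((N:ℤ) + m) with hudef
  set cc : ℕ → ℝ := fun m => 2 - E + W ((N:ℤ) + m) with hccdef
  set R : ℕ → ℝ := fun m => ((starRingEnd ℂ) (u m) * u (m+1)).re with hRdef
  set S : ℕ → ℝ := fun m => Complex.normSq (u m) + Complex.normSq (u (m+1)) with hSdef
  set A : ℕ → ℝ := fun m => S m - cc m * R m with hAdef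
  clear_value u cc R S A
  have rec' : ∀ m : ℕ, u (m+1+1) = ((cc (m+1) : ℝ) : ℂ) * u (m+1) - u m := by
    intro m
    simp only [hudef, hccdef]
    push_cast
    rw [show (N:ℤ) + ((m:ℤ)+1+1) = ((N:ℤ)+m+1)+1 by ring,
      show (N:ℤ) + ((m:ℤ)+1) = ((N:ℤ)+m+1) by ring]
    rw [hrec ((N:ℤ)+m+1), show (N:ℤ)+m+1-1 = (N:ℤ)+m by ring]
    push_cast
    ring
  have hAstep : ∀ m : ℕ, A (m+1) = A m + (cc m - cc (m+1)) * R m := by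
    intro m
    have halg := wvn_alg (u m) (u (m+1)) (cc (m+1))
    rw [← rec' m] at halg
    simp only [hAdef, hSdef, hRdef]
    rw [halg]
    ring
  have hcc : ∀ m : ℕ, |cc m| ≤ 2 - ε := by
    intro m
    have hw := hWsmall ((N:ℤ)+m) (by linarith [Int.ofNat_nonneg m])
    have h2E : |2 - E| = 2 - 2*ε := by rw [hεdef]; ring
    simp only [hccdef]
    calc |2 - E + W ((N:ℤ)+m)| ≤ |2 - E| + |W ((N:ℤ)+m)| := abs_add_le _ _
      _ ≤ (2 - 2*ε) + ε := by rw [h2E]; linarith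
      _ = 2 - ε := by ring
  have hS0 : ∀ m, 0 ≤ S m := by
    intro m
    simp only [hSdef]
    exact add_nonneg (Complex.normSq_nonneg _) (Complex.normSq_nonneg _)
  have hRb : ∀ m, |R m| ≤ S m / 2 := by
    intro m
    simp only [hRdef, hSdef]
    exact wvn_R (u m) (u (m+1))
  have hAlow : ∀ m, ε/2 * S m ≤ A m := by
    intro m
    have h1 : cc m * R m ≤ (2-ε) * (S m / 2) := by
      calc cc m * R m ≤ |cc m * R m| := le_abs_self _
        _ = |cc m| * |R m| := abs_mul _ _
        _ ≤ (2-ε) * (S m / 2) :=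
            mul_le_mul (hcc m) (hRb m) (abs_nonneg _) (by linarith)
    simp only [hAdef]
    linarith
  have hAup : ∀ m, A m ≤ 2 * S m := by
    intro m
    have h1 : -(cc m * R m) ≤ (2-ε) * (S m / 2) := by
      calc -(cc m * R m) ≤ |cc m * R m| := neg_le_abs _
        _ = |cc m| * |R m| := abs_mul _ _
        _ ≤ (2-ε) * (S m / 2) :=
            mul_le_mul (hcc m) (hRb m) (abs_nonneg _) (by linarith)
    have e : (2-ε) * (S m / 2) = S m - ε * (S m / 2) := by ring
    rw [e] at h1
    simp only [hAdef]
    linarith [mul_nonneg hε.le (div_nonneg (hS0 m) (by norm_num : (0:ℝ) ≤ 2))]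
  have hA0 : ∀ m, 0 ≤ A m := by
    intro m
    have h1 := hAlow m
    have h2 : 0 ≤ ε/2 * S m :=
      mul_nonneg (div_nonneg hε.le (by norm_num)) (hS0 m)
    linarith
  have hd : ∀ m : ℕ, |cc m - cc (m+1)| ≤ h (N + m) := by
    intro m
    have e1 : (N:ℤ) + (m:ℤ) = ((N+m : ℕ) : ℤ) := by push_cast; ring
    have e2 : (N:ℤ) + ((m:ℤ)+1) = ((N+m+1 : ℕ) : ℤ) := by push_cast; ring
    have hNm : 1 ≤ N + m := le_trans hN1 (Nat.le_add_right N m)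
    have w1 : W ((N:ℤ) + m) = q * Real.sin (k * ((N+m:ℕ):ℝ) ^ a) * ((N+m:ℕ):ℝ) ^ (-b) := by
      rw [e1]; exact hWeq _ hNm
    have w2 : W ((N:ℤ) + ((m:ℤ)+1)) =
        q * Real.sin (k * (((N+m:ℕ):ℝ)+1) ^ a) * (((N+m:ℕ):ℝ)+1) ^ (-b) := by
      rw [e2, hWeq _ (le_trans hNm (Nat.le_succ _))]
      push_cast
      ring_nf
    have hbv := wvn_bv q k a b ha hab (N+m) hNm
    have heq : |cc m - cc (m+1)| = |W ((N:ℤ)+m) - W ((N:ℤ)+((m:ℤ)+1))| := by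
      simp only [hccdef]; push_cast; ring_nf
    rw [heq, w1, w2, abs_sub_comm]
    simp only [hhdef, hCdef]
    exact hbv
  -- partial sums of the variation are small
  have hsumN : Summable (fun j : ℕ => h (j + N)) := by
    exact (summable_nat_add_iff N).2 hsum
  have hpart : ∀ m : ℕ, ∑ j ∈ Finset.range m, h (N + j) ≤ ε / 2 := by
    intro m
    have e : ∑ j ∈ Finset.range m, h (N + j) = ∑ j ∈ Finset.range m, h (j + N) := by
      apply Finset.sum_congr rfl; intro j _; rw [Nat.add_comm]
    rw [e]
    exact le_trans (Summable.sum_le_tsum (Finset.range m) (fun i _ => hhnn _) hsumN) hNs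
  have hone : ∀ m : ℕ, h (N + m) ≤ ε / 2 := by
    intro m
    have h1 := hpart (m+1)
    have h2 := hpart m
    rw [Finset.sum_range_succ] at h1
    have := Finset.sum_nonneg (fun j (_ : j ∈ Finset.range m) => hhnn (N + j))
    linarith
  -- step inequality
  have hstep : ∀ m : ℕ, A m * (1 - h (N+m)/ε) ≤ A (m+1) := by
    intro m
    have hS2 : S m / 2 ≤ A m / ε := by
      have := hAlow m
      rw [div_le_div_iff₀ (by norm_num) hε]
      nlinarith
    have h1 : -(h (N+m) * (A m / ε)) ≤ (cc m - cc (m+1)) * R m := by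
      have habs : |(cc m - cc (m+1)) * R m| ≤ h (N+m) * (A m / ε) := by
        rw [abs_mul]
        calc |cc m - cc (m+1)| * |R m| ≤ h (N+m) * (S m / 2) :=
              mul_le_mul (hd m) (hRb m) (abs_nonneg _) (hhnn _)
          _ ≤ h (N+m) * (A m / ε) := mul_le_mul_of_nonneg_left hS2 (hhnn _)
      linarith [neg_abs_le ((cc m - cc (m+1)) * R m)]
    rw [hAstep m]
    have : A m * (1 - h (N+m)/ε) = A m - h (N+m) * (A m / ε) := by ring
    linarith [this ▸ le_refl (A m * (1 - h (N+m)/ε))]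
  -- inductive lower bound
  have hlow : ∀ m : ℕ, A 0 * (1 - (∑ j ∈ Finset.range m, h (N + j)) / ε) ≤ A m := by
    intro m
    induction m with
    | zero => simp
    | succ m ih =>
      have hx0 : 0 ≤ h (N+m)/ε := div_nonneg (hhnn _) hε.le
      have hx1 : h (N+m)/ε ≤ 1/2 := by
        rw [div_le_div_iff₀ hε (by norm_num)]
        have := hone m
        linarith
      have hP : (∑ j ∈ Finset.range m, h (N + j)) / ε ≤ 1/2 := by
        rw [div_le_div_iff₀ hε (by norm_num)]
        have := hpart m
        linarith
      have hPn : 0 ≤ (∑ j ∈ Finset.range m, h (N + j)) / ε :=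
        div_nonneg (Finset.sum_nonneg fun j _ => hhnn _) hε.le
      have hs := hstep m
      rw [Finset.sum_range_succ]
      have e : (∑ j ∈ Finset.range m, h (N + j) + h (N + m)) / ε
          = (∑ j ∈ Finset.range m, h (N + j))/ε + h (N+m)/ε := by ring
      rw [e]
      nlinarith [hA0 0, hA0 m, mul_nonneg (hA0 0)
        (mul_nonneg hPn hx0)]
  have hAhalf : ∀ m : ℕ, A 0 / 2 ≤ A m := by
    intro m
    have h1 := hlow m
    have hP : (∑ j ∈ Finset.range m, h (N + j)) / ε ≤ 1/2 := by
      rw [div_le_div_iff₀ hε (by norm_num)]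
      have := hpart m
      linarith
    nlinarith [hA0 0]
  -- A 0 is positive
  have hpair : ¬ (ψ (N:ℤ) = 0 ∧ ψ ((N:ℤ)+1) = 0) := by
    rintro ⟨z0, z1⟩
    exact hn0 (wvn_zero (fun n => ((2 - E + W n : ℝ) : ℂ)) ψ hrec (N:ℤ) z0 z1 n0)
  have hu0 : u 0 = ψ (N:ℤ) := by simp [hudef]
  have hu1 : u 1 = ψ ((N:ℤ)+1) := by simp [hudef]
  have hS0pos : 0 < S 0 := by
    rcases not_and_or.1 hpair with hz | hz
    · have : 0 < Complex.normSq (u 0) := by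
        rw [hu0]; exact Complex.normSq_pos.2 hz
      have := Complex.normSq_nonneg (u 1)
      simp only [hSdef]
      linarith
    · have : 0 < Complex.normSq (u 1) := by
        rw [hu1]; exact Complex.normSq_pos.2 hz
      have := Complex.normSq_nonneg (u 0)
      simp only [hSdef]
      linarith
  have hA0pos : 0 < A 0 := by
    have h1 := hAlow 0
    nlinarith [mul_pos hε hS0pos]
  -- S tends to zero
  have htendZ : Tendsto (fun n : ℤ => Complex.normSq (ψ n)) atTop (nhds 0) := by
    have h1 : Tendsto (fun n : ℤ => ‖ψ n‖ ^ 2) cofinite (nhds 0) :=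
      hψ.tendsto_cofinite_zero
    have h2 : (fun n : ℤ => ‖ψ n‖ ^ 2) = fun n : ℤ => Complex.normSq (ψ n) := by
      funext n
      rw [Complex.sq_norm]
    rw [h2] at h1
    exact h1.mono_left (by rw [Int.cofinite_eq]; exact le_sup_right)
  have hshift : Tendsto (fun m : ℕ => (N:ℤ) + m) atTop atTop := by
    apply tendsto_atTop_add_const_left
    exact tendsto_natCast_atTop_atTop
  have ht0 : Tendsto (fun m : ℕ => Complex.normSq (u m)) atTop (nhds 0) := by
    simp only [hudef]
    exact htendZ.comp hshift
  have ht1 : Tendsto (fun m : ℕ => Complex.normSq (u (m+1))) atTop (nhds 0) := by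
    exact ht0.comp (tendsto_add_atTop_nat 1)
  have htS : Tendsto S atTop (nhds 0) := by
    have := ht0.add ht1
    simpa [hSdef] using this
  have hev : ∀ᶠ m in atTop, S m < A 0 / 4 :=
    htS.eventually (gt_mem_nhds (div_pos hA0pos (by norm_num)))
  obtain ⟨m, hm⟩ := hev.exists
  have := hAup m
  have := hAhalf m
  linarith
end

section
/- Let k ∈ (0,π) with sin(2k) ≠ 0, and let t ∈ ℝ satisfy t + sin(2k)·n − sin(2kn) ≠ 0 for every n ∈ ℤ. Set g(n) := sin(2k)·n − sin(2kn), define ψ : ℤ → ℝ by ψ(n) := sin(kn)/(t + g(n)), and define V : ℤ → ℝ by V(n) := cos(k)·[ (g(n)−g(n−1))/(t+g(n−1)) − (g(n+1)−g(n))/(t+g(n+1)) ] − 2·sin(k)·sin(2k)·sin(2kn)·(t+g(n)) / ( (t+g(n−1))·(t+g(n+1)) ). Then V is bounded, ψ ∈ ℓ²(ℤ), ψ ≠ 0, and (Δ + V)ψ = (2 − 2cos k)·ψ; in particular 2 − 2cos k ∈ (0,4) is an eigenvalue of Δ + V embedded in [0,4]. -/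
lemma wvn_lower_bound (k t : ℝ) (hsin : Real.sin (2 * k) ≠ 0) (g : ℤ → ℝ)
    (hg : ∀ n : ℤ, g n = Real.sin (2 * k) * (n : ℝ) - Real.sin (2 * k * (n : ℝ)))
    (ht : ∀ n : ℤ, t + g n ≠ 0) :
    ∃ δ > 0, ∀ n : ℤ, δ * (|(n : ℝ)| + 1) ≤ |t + g n| := by
  set S := |Real.sin (2 * k)| with hS
  have hS0 : 0 < S := abs_pos.mpr hsin
  set N : ℕ := ⌈(2 * |t| + 2 + S) / S⌉₊ with hN
  have hne : (Finset.Icc (-(N:ℤ)) (N:ℤ)).Nonempty := ⟨0, by simp⟩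
  obtain ⟨b, hb, hbmin⟩ := Finset.exists_min_image (Finset.Icc (-(N:ℤ)) (N:ℤ))
    (fun m => |t + g m| / (|(m:ℝ)| + 1)) hne
  have hb0 : 0 < |t + g b| / (|(b:ℝ)| + 1) :=
    div_pos (abs_pos.mpr (ht b)) (by positivity)
  refine ⟨min (|t + g b| / (|(b:ℝ)| + 1)) (S / 2), lt_min hb0 (by positivity), ?_⟩
  intro n
  have hn1 : (0:ℝ) < |(n:ℝ)| + 1 := by positivity
  by_cases hcase : |n| ≤ (N:ℤ)
  · have hmem : n ∈ Finset.Icc (-(N:ℤ)) (N:ℤ) := by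
      rw [Finset.mem_Icc]; constructor <;> [linarith [neg_abs_le n]; linarith [le_abs_self n]]
    have h1 := hbmin n hmem
    have h2 : (|t + g b| / (|(b:ℝ)| + 1)) * (|(n:ℝ)| + 1) ≤ |t + g n| := by
      rw [← le_div_iff₀ hn1]; exact h1
    calc min (|t + g b| / (|(b:ℝ)| + 1)) (S / 2) * (|(n:ℝ)| + 1)
        ≤ (|t + g b| / (|(b:ℝ)| + 1)) * (|(n:ℝ)| + 1) := by
          apply mul_le_mul_of_nonneg_right (min_le_left _ _) (le_of_lt hn1)
      _ ≤ |t + g n| := h2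
  · push_neg at hcase
    have hNn : ((N:ℝ)) < |(n:ℝ)| := by
      have : (N:ℤ) < |n| := hcase
      calc ((N:ℝ)) < ((|n| : ℤ) : ℝ) := by exact_mod_cast this
        _ = |(n:ℝ)| := by push_cast; simp
    have hceil : (2 * |t| + 2 + S) / S ≤ (N:ℝ) := Nat.le_ceil _
    have hSn : 2 * |t| + 2 + S ≤ S * |(n:ℝ)| := by
      rw [div_le_iff₀ hS0] at hceil
      nlinarith
    have key : S * |(n:ℝ)| - (|t| + 1) ≤ |t + g n| := by
      have h1 : |Real.sin (2*k) * (n:ℝ)| - |Real.sin (2 * k * (n:ℝ)) - t| ≤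
          |t + g n| := by
        calc |Real.sin (2*k) * (n:ℝ)| - |Real.sin (2 * k * (n:ℝ)) - t|
            ≤ |Real.sin (2*k) * (n:ℝ) - (Real.sin (2 * k * (n:ℝ)) - t)| :=
              abs_sub_abs_le_abs_sub _ _
          _ = |t + g n| := by rw [hg n]; ring_nf
      have h2 : |Real.sin (2*k) * (n:ℝ)| = S * |(n:ℝ)| := by rw [abs_mul]
      have h3 : |Real.sin (2 * k * (n:ℝ)) - t| ≤ 1 + |t| := by
        calc |Real.sin (2 * k * (n:ℝ)) - t| ≤ |Real.sin (2 * k * (n:ℝ))| + |t| :=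
            abs_sub _ _
          _ ≤ 1 + |t| := by linarith [Real.abs_sin_le_one (2 * k * (n:ℝ))]
      linarith
    calc min (|t + g b| / (|(b:ℝ)| + 1)) (S / 2) * (|(n:ℝ)| + 1)
        ≤ (S / 2) * (|(n:ℝ)| + 1) := by
          apply mul_le_mul_of_nonneg_right (min_le_right _ _) (le_of_lt hn1)
      _ ≤ S * |(n:ℝ)| - (|t| + 1) := by nlinarith
      _ ≤ |t + g n| := key

lemma wvn_gdiff_bound (k : ℝ) (g : ℤ → ℝ)
    (hg : ∀ n : ℤ, g n = Real.sin (2 * k) * (n : ℝ) - Real.sin (2 * k * (n : ℝ))) :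
    ∀ m n : ℤ, (m:ℝ) - (n:ℝ) = 1 → |g m - g n| ≤ |Real.sin (2 * k)| + 2 := by
  intro m n hmn
  rw [hg m, hg n]
  have h : Real.sin (2 * k) * (m:ℝ) - Real.sin (2 * k * (m:ℝ)) -
      (Real.sin (2 * k) * (n:ℝ) - Real.sin (2 * k * (n:ℝ)))
      = Real.sin (2 * k) + (Real.sin (2 * k * (n:ℝ)) - Real.sin (2 * k * (m:ℝ))) := by
    linear_combination Real.sin (2 * k) * hmn
  rw [h]
  calc |Real.sin (2 * k) + (Real.sin (2 * k * (n:ℝ)) - Real.sin (2 * k * (m:ℝ)))|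
      ≤ |Real.sin (2 * k)| + |Real.sin (2 * k * (n:ℝ)) - Real.sin (2 * k * (m:ℝ))| := abs_add_le _ _
    _ ≤ |Real.sin (2 * k)| + (|Real.sin (2 * k * (n:ℝ))| + |Real.sin (2 * k * (m:ℝ))|) := by
        linarith [abs_sub (Real.sin (2 * k * (n:ℝ))) (Real.sin (2 * k * (m:ℝ)))]
    _ ≤ |Real.sin (2 * k)| + 2 := by
        linarith [Real.abs_sin_le_one (2 * k * (n:ℝ)), Real.abs_sin_le_one (2 * k * (m:ℝ))]

lemma wvn_half (n : ℤ) (e : ℤ) (he : e = 1 ∨ e = -1) :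
    (|(n:ℝ)| + 1) / 2 ≤ |((n + e : ℤ):ℝ)| + 1 := by
  have h1 : |(n:ℝ)| - 1 ≤ |((n + e : ℤ):ℝ)| := by
    have : |(n:ℝ)| - |(e:ℝ)| ≤ |(n:ℝ) + (e:ℝ)| := by
      calc |(n:ℝ)| - |(e:ℝ)| = |(n:ℝ)| - |-(e:ℝ)| := by rw [abs_neg]
        _ ≤ |(n:ℝ) - -(e:ℝ)| := abs_sub_abs_le_abs_sub _ _
        _ = |(n:ℝ) + (e:ℝ)| := by ring_nf
    have he1 : |(e:ℝ)| = 1 := by rcases he with h | h <;> simp [h]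
    push_cast
    linarith [this, he1.le]
  have h2 : (0:ℝ) ≤ |((n + e : ℤ):ℝ)| := abs_nonneg _
  linarith

lemma wvn_eigen (k t : ℝ) (g ψ V : ℤ → ℝ)
    (hg : ∀ n : ℤ, g n = Real.sin (2 * k) * (n : ℝ) - Real.sin (2 * k * (n : ℝ)))
    (ht : ∀ n : ℤ, t + g n ≠ 0)
    (hψdef : ∀ n : ℤ, ψ n = Real.sin (k * (n : ℝ)) / (t + g n))
    (hVdef : ∀ n : ℤ, V n =
      Real.cos k * ((g n - g (n - 1)) / (t + g (n - 1))
          - (g (n + 1) - g n) / (t + g (n + 1)))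
        - 2 * Real.sin k * Real.sin (2 * k) * Real.sin (2 * k * (n : ℝ)) * (t + g n)
          / ((t + g (n - 1)) * (t + g (n + 1)))) :
    ∀ n : ℤ, (2 * ψ n - ψ (n + 1) - ψ (n - 1)) + V n * ψ n = (2 - 2 * Real.cos k) * ψ n := by
  intro n
  have h0 := ht n
  have hp := ht (n + 1)
  have hm := ht (n - 1)
  rw [hψdef n, hψdef (n + 1), hψdef (n - 1), hVdef n]
  field_simp
  simp only [hg]
  have cp : ((n + 1 : ℤ) : ℝ) = (n : ℝ) + 1 := by push_cast; ring
  have cm : ((n - 1 : ℤ) : ℝ) = (n : ℝ) - 1 := by push_cast; ring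
  rw [cp, cm]
  have e1 : Real.sin (k * ((n:ℝ) + 1)) = Real.sin (k * (n:ℝ)) * Real.cos k + Real.cos (k * (n:ℝ)) * Real.sin k := by
    rw [show k * ((n:ℝ) + 1) = k * (n:ℝ) + k by ring, Real.sin_add]
  have e2 : Real.sin (k * ((n:ℝ) - 1)) = Real.sin (k * (n:ℝ)) * Real.cos k - Real.cos (k * (n:ℝ)) * Real.sin k := by
    rw [show k * ((n:ℝ) - 1) = k * (n:ℝ) - k by ring, Real.sin_sub]
  have e3 : Real.sin (2 * k * ((n:ℝ) + 1)) = Real.sin (2 * (k * (n:ℝ))) * Real.cos (2 * k) + Real.cos (2 * (k * (n:ℝ))) * Real.sin (2 * k) := by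
    rw [show 2 * k * ((n:ℝ) + 1) = 2 * (k * (n:ℝ)) + 2 * k by ring, Real.sin_add]
  have e4 : Real.sin (2 * k * ((n:ℝ) - 1)) = Real.sin (2 * (k * (n:ℝ))) * Real.cos (2 * k) - Real.cos (2 * (k * (n:ℝ))) * Real.sin (2 * k) := by
    rw [show 2 * k * ((n:ℝ) - 1) = 2 * (k * (n:ℝ)) - 2 * k by ring, Real.sin_sub]
  have e5 : Real.sin (2 * k * (n:ℝ)) = Real.sin (2 * (k * (n:ℝ))) := by ring_nf
  have e6 : Real.sin (2 * (k * (n:ℝ))) = 2 * Real.sin (k * (n:ℝ)) * Real.cos (k * (n:ℝ)) := Real.sin_two_mul _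
  have e7 : Real.cos (2 * (k * (n:ℝ))) = 1 - 2 * Real.sin (k * (n:ℝ)) ^ 2 := by
    rw [Real.cos_two_mul, ← Real.sin_sq_add_cos_sq (k * (n:ℝ))]; ring
  have e8 : Real.sin (2 * k) = 2 * Real.sin k * Real.cos k := Real.sin_two_mul _
  have e9 : Real.cos (2 * k) = 1 - 2 * Real.sin k ^ 2 := by
    rw [Real.cos_two_mul, ← Real.sin_sq_add_cos_sq k]; ring
  rw [e5, e1, e2, e3, e4, e6, e7, e8, e9]
  ring


set_option maxHeartbeats 1000000 in
/-- Proposition 1.6 (one-dimensional case): the explicit Wigner–von Neumann type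
potential `V` has the embedded eigenvalue `2 − 2cos k ∈ (0,4)` with the explicit
eigenvector `ψ(n) = sin(kn)/(t + g(n)) ∈ ℓ²(ℤ)`. -/
theorem wigner_von_neumann_embedded_eigenvalue
    (k t : ℝ) (hk : k ∈ Set.Ioo (0 : ℝ) Real.pi) (hsin : Real.sin (2 * k) ≠ 0)
    (g ψ V : ℤ → ℝ)
    (hg : ∀ n : ℤ, g n = Real.sin (2 * k) * (n : ℝ) - Real.sin (2 * k * (n : ℝ)))
    (ht : ∀ n : ℤ, t + g n ≠ 0)
    (hψdef : ∀ n : ℤ, ψ n = Real.sin (k * (n : ℝ)) / (t + g n))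
    (hVdef : ∀ n : ℤ, V n =
      Real.cos k * ((g n - g (n - 1)) / (t + g (n - 1))
          - (g (n + 1) - g n) / (t + g (n + 1)))
        - 2 * Real.sin k * Real.sin (2 * k) * Real.sin (2 * k * (n : ℝ)) * (t + g n)
          / ((t + g (n - 1)) * (t + g (n + 1)))) :
    (∃ M : ℝ, ∀ n, |V n| ≤ M) ∧
    (Summable fun n : ℤ => (ψ n) ^ 2) ∧
    ψ ≠ 0 ∧
    (∀ n : ℤ, (2 * ψ n - ψ (n + 1) - ψ (n - 1)) + V n * ψ n = (2 - 2 * Real.cos k) * ψ n) ∧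
    (2 - 2 * Real.cos k) ∈ Set.Ioo (0 : ℝ) 4 := by
  obtain ⟨δ, hδ0, hδ⟩ := wvn_lower_bound k t hsin g hg ht
  set S := |Real.sin (2 * k)| with hSdef
  have hS0 : 0 < S := abs_pos.mpr hsin
  have hsk : 0 < Real.sin k := Real.sin_pos_of_pos_of_lt_pi hk.1 hk.2
  refine ⟨?_, ?_, ?_, ?_, ?_⟩
  · -- boundedness of V
    refine ⟨|Real.cos k| * ((S + 2) / δ + (S + 2) / δ) + 8 * S * (|t| + S + 1) / δ ^ 2, ?_⟩
    intro n
    have hA := hδ (n - 1)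
    have hB := hδ n
    have hC := hδ (n + 1)
    have hA0 : (0:ℝ) < |t + g (n - 1)| := abs_pos.mpr (ht (n - 1))
    have hC0 : (0:ℝ) < |t + g (n + 1)| := abs_pos.mpr (ht (n + 1))
    have hAδ : δ ≤ |t + g (n - 1)| :=
      le_trans (by nlinarith [abs_nonneg (((n - 1 : ℤ)):ℝ)]) hA
    have hCδ : δ ≤ |t + g (n + 1)| :=
      le_trans (by nlinarith [abs_nonneg (((n + 1 : ℤ)):ℝ)]) hC
    have hhalfA : (|(n:ℝ)| + 1) / 2 ≤ |((n - 1 : ℤ):ℝ)| + 1 := by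
      have h := wvn_half n (-1) (Or.inr rfl)
      rwa [show n + (-1) = n - 1 by ring] at h
    have hhalfC : (|(n:ℝ)| + 1) / 2 ≤ |((n + 1 : ℤ):ℝ)| + 1 := wvn_half n 1 (Or.inl rfl)
    have hA' : δ * ((|(n:ℝ)| + 1) / 2) ≤ |t + g (n - 1)| :=
      le_trans (by nlinarith) hA
    have hC' : δ * ((|(n:ℝ)| + 1) / 2) ≤ |t + g (n + 1)| :=
      le_trans (by nlinarith) hC
    have hg1 : |g n - g (n - 1)| ≤ S + 2 :=
      wvn_gdiff_bound k g hg n (n - 1) (by push_cast; ring)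
    have hg2 : |g (n + 1) - g n| ≤ S + 2 :=
      wvn_gdiff_bound k g hg (n + 1) n (by push_cast; ring)
    have hBub : |t + g n| ≤ |t| + S * |(n:ℝ)| + 1 := by
      rw [hg n]
      calc |t + (Real.sin (2 * k) * (n:ℝ) - Real.sin (2 * k * (n:ℝ)))|
          ≤ |t| + |Real.sin (2 * k) * (n:ℝ) - Real.sin (2 * k * (n:ℝ))| := abs_add_le _ _
        _ ≤ |t| + (|Real.sin (2 * k) * (n:ℝ)| + |Real.sin (2 * k * (n:ℝ))|) := by
            linarith [abs_sub (Real.sin (2 * k) * (n:ℝ)) (Real.sin (2 * k * (n:ℝ)))]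
        _ ≤ |t| + S * |(n:ℝ)| + 1 := by
            rw [abs_mul]
            linarith [Real.abs_sin_le_one (2 * k * (n:ℝ))]
    have hnum : |2 * Real.sin k * Real.sin (2 * k) * Real.sin (2 * k * (n:ℝ)) * (t + g n)|
        ≤ 2 * S * (|t| + S * |(n:ℝ)| + 1) := by
      rw [abs_mul, abs_mul, abs_mul, abs_mul, abs_two]
      calc 2 * |Real.sin k| * S * |Real.sin (2 * k * (n:ℝ))| * |t + g n|
          ≤ 2 * 1 * S * 1 * (|t| + S * |(n:ℝ)| + 1) := by
            gcongr <;> first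
              | exact Real.abs_sin_le_one _
              | exact hBub
        _ = 2 * S * (|t| + S * |(n:ℝ)| + 1) := by ring
    have hY : |2 * Real.sin k * Real.sin (2 * k) * Real.sin (2 * k * (n:ℝ)) * (t + g n)
        / ((t + g (n - 1)) * (t + g (n + 1)))| ≤ 8 * S * (|t| + S + 1) / δ ^ 2 := by
      rw [abs_div, abs_mul (t + g (n - 1)) (t + g (n + 1))]
      rw [div_le_iff₀ (mul_pos hA0 hC0)]
      have hMden : (8 * S * (|t| + S + 1) / δ ^ 2) * (δ * ((|(n:ℝ)| + 1) / 2) * (δ * ((|(n:ℝ)| + 1) / 2)))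
          = 2 * S * (|t| + S + 1) * (|(n:ℝ)| + 1) ^ 2 := by
        field_simp
        ring
      calc |2 * Real.sin k * Real.sin (2 * k) * Real.sin (2 * k * (n:ℝ)) * (t + g n)|
          ≤ 2 * S * (|t| + S * |(n:ℝ)| + 1) := hnum
        _ ≤ 2 * S * ((|t| + S + 1) * (|(n:ℝ)| + 1) ^ 2) := by
            apply mul_le_mul_of_nonneg_left _ (by positivity)
            nlinarith [abs_nonneg (n:ℝ), abs_nonneg t, hS0.le,
              mul_nonneg (abs_nonneg t) (mul_nonneg (abs_nonneg (n:ℝ)) (abs_nonneg (n:ℝ))),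
              mul_nonneg hS0.le (mul_nonneg (abs_nonneg (n:ℝ)) (abs_nonneg (n:ℝ))),
              mul_nonneg hS0.le (abs_nonneg (n:ℝ)),
              mul_nonneg (abs_nonneg t) (abs_nonneg (n:ℝ)),
              mul_nonneg (abs_nonneg (n:ℝ)) (abs_nonneg (n:ℝ))]
        _ = 2 * S * (|t| + S + 1) * (|(n:ℝ)| + 1) ^ 2 := by ring
        _ = (8 * S * (|t| + S + 1) / δ ^ 2) * (δ * ((|(n:ℝ)| + 1) / 2) * (δ * ((|(n:ℝ)| + 1) / 2))) := hMden.symm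
        _ ≤ (8 * S * (|t| + S + 1) / δ ^ 2) * (|t + g (n - 1)| * |t + g (n + 1)|) := by
            have hM0 : (0:ℝ) ≤ 8 * S * (|t| + S + 1) / δ ^ 2 := by positivity
            have h1 : (0:ℝ) ≤ δ * ((|(n:ℝ)| + 1) / 2) := by positivity
            apply mul_le_mul_of_nonneg_left _ hM0
            exact mul_le_mul hA' hC' h1 (le_of_lt hA0)
    have hX : |Real.cos k * ((g n - g (n - 1)) / (t + g (n - 1))
        - (g (n + 1) - g n) / (t + g (n + 1)))| ≤ |Real.cos k| * ((S + 2) / δ + (S + 2) / δ) := by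
      rw [abs_mul]
      apply mul_le_mul_of_nonneg_left _ (abs_nonneg _)
      calc |(g n - g (n - 1)) / (t + g (n - 1)) - (g (n + 1) - g n) / (t + g (n + 1))|
          ≤ |(g n - g (n - 1)) / (t + g (n - 1))| + |(g (n + 1) - g n) / (t + g (n + 1))| :=
            abs_sub _ _
        _ = |g n - g (n - 1)| / |t + g (n - 1)| + |g (n + 1) - g n| / |t + g (n + 1)| := by
            rw [abs_div, abs_div]
        _ ≤ (S + 2) / δ + (S + 2) / δ := by
            apply add_le_add
            · exact div_le_div₀ (by positivity) hg1 hδ0 hAδ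
            · exact div_le_div₀ (by positivity) hg2 hδ0 hCδ
    rw [hVdef n]
    calc |Real.cos k * ((g n - g (n - 1)) / (t + g (n - 1))
            - (g (n + 1) - g n) / (t + g (n + 1)))
          - 2 * Real.sin k * Real.sin (2 * k) * Real.sin (2 * k * (n:ℝ)) * (t + g n)
            / ((t + g (n - 1)) * (t + g (n + 1)))|
        ≤ |Real.cos k * ((g n - g (n - 1)) / (t + g (n - 1))
            - (g (n + 1) - g n) / (t + g (n + 1)))|
          + |2 * Real.sin k * Real.sin (2 * k) * Real.sin (2 * k * (n:ℝ)) * (t + g n)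
            / ((t + g (n - 1)) * (t + g (n + 1)))| := abs_sub _ _
      _ ≤ |Real.cos k| * ((S + 2) / δ + (S + 2) / δ) + 8 * S * (|t| + S + 1) / δ ^ 2 :=
          add_le_add hX hY
  · -- summability
    have hnat : Summable (fun m : ℕ => 1 / ((m:ℝ) + 1) ^ 2) := by
      have h2 : Summable (fun m : ℕ => 1 / ((m:ℝ)) ^ 2) :=
        Real.summable_one_div_nat_pow.mpr one_lt_two
      have h3 := (summable_nat_add_iff 1).mpr h2
      refine h3.congr fun m => ?_
      push_cast
      ring
    have hbase : Summable (fun n : ℤ => (1 / δ ^ 2) * (1 / (|(n:ℝ)| + 1) ^ 2)) := by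
      apply Summable.mul_left
      apply Summable.of_nat_of_neg
      · refine hnat.congr fun m => ?_
        simp
      · refine hnat.congr fun m => ?_
        simp
    apply Summable.of_nonneg_of_le (fun n => sq_nonneg _) _ hbase
    intro n
    rw [hψdef n, div_pow]
    have hpos : (0:ℝ) < (δ * (|(n:ℝ)| + 1)) ^ 2 := by positivity
    have h2 : (δ * (|(n:ℝ)| + 1)) ^ 2 ≤ (t + g n) ^ 2 := by
      rw [← sq_abs (t + g n)]
      exact pow_le_pow_left₀ (by positivity) (hδ n) 2
    calc Real.sin (k * (n:ℝ)) ^ 2 / (t + g n) ^ 2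
        ≤ 1 / (δ * (|(n:ℝ)| + 1)) ^ 2 :=
          div_le_div₀ zero_le_one (Real.sin_sq_le_one _) hpos h2
      _ = (1 / δ ^ 2) * (1 / (|(n:ℝ)| + 1) ^ 2) := by rw [mul_pow, ← one_div_mul_one_div]
  · -- ψ ≠ 0
    intro h
    have h1 : ψ 1 = 0 := congrFun h 1
    rw [hψdef 1] at h1
    have h2 : ((1:ℤ):ℝ) = 1 := by norm_num
    rw [h2, mul_one] at h1
    rcases div_eq_zero_iff.mp h1 with h3 | h3
    · exact absurd h3 (ne_of_gt hsk)
    · exact ht 1 h3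
  · exact wvn_eigen k t g ψ V hg ht hψdef hVdef
  · -- embedded eigenvalue location
    constructor
    · nlinarith [Real.sin_sq_add_cos_sq k, mul_pos hsk hsk]
    · nlinarith [Real.sin_sq_add_cos_sq k, mul_pos hsk hsk]
end

section
/- Let k ∈ (0,π) with sin(2k) ≠ 0, and let t ∈ ℝ satisfy t + sin(2k)·n − sin(2kn) ≠ 0 for every n ∈ ℤ. With g(n) := sin(2k)·n − sin(2kn), define V(n) := cos(k)·[ (g(n)−g(n−1))/(t+g(n−1)) − (g(n+1)−g(n))/(t+g(n+1)) ] − 2·sin(k)·sin(2k)·sin(2kn)·(t+g(n)) / ( (t+g(n−1))·(t+g(n+1)) ). Then there exists C > 0 such that for every n ∈ ℤ with n ≠ 0: | V(n) + 4·sin(k)·sin(2kn)/n | ≤ C/n². -/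
private lemma abs_mul_le' {x y X Y : ℝ} (hx : |x| ≤ X) (hy : |y| ≤ Y) : |x * y| ≤ X * Y := by
  rw [abs_mul]
  exact mul_le_mul hx hy (abs_nonneg _) ((abs_nonneg x).trans hx)

private lemma abs_add_le' {x y X Y : ℝ} (hx : |x| ≤ X) (hy : |y| ≤ Y) : |x + y| ≤ X + Y :=
  (abs_add_le x y).trans (add_le_add hx hy)

private lemma abs_sub_le'' {x y X Y : ℝ} (hx : |x| ≤ X) (hy : |y| ≤ Y) : |x - y| ≤ X + Y := by
  rw [sub_eq_add_neg]; exact abs_add_le' hx (by rwa [abs_neg])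

private lemma key_identity (n t S Ck s sm s0 sp : ℝ) (hs : s = 2 * S * Ck)
    (hrel : sm + sp = 2 * s0 * (1 - 2 * S ^ 2))
    (hn : n ≠ 0)
    (hm : t + (s * (n - 1) - sm) ≠ 0) (hp : t + (s * (n + 1) - sp) ≠ 0) :
    Ck * ((s * n - s0 - (s * (n - 1) - sm)) / (t + (s * (n - 1) - sm))
        - (s * (n + 1) - sp - (s * n - s0)) / (t + (s * (n + 1) - sp)))
      - 2 * S * s * s0 * (t + (s * n - s0))
          / ((t + (s * (n - 1) - sm)) * (t + (s * (n + 1) - sp)))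
      + 4 * S * s0 / n
    = (n * (Ck * (2 * s ^ 2 + s * (sm - sp) + (s + (sm - s0)) * (t - sp)
                  - (s + (s0 - sp)) * (t - sm))
            - 2 * S * s * s0 * (t - s0) + 4 * S * s0 * s * (2 * t - sm - sp))
        + 4 * S * s0 * ((t - sm) * (t - sp) - s ^ 2 + s * (sp - sm)))
      / (n * ((t + (s * (n - 1) - sm)) * (t + (s * (n + 1) - sp)))) := by
  have hsp : sp = 2 * s0 * (1 - 2 * S ^ 2) - sm := by linarith
  field_simp
  subst hsp
  subst hs
  ring

set_option maxHeartbeats 1000000 in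
private lemma num_bound (n t S Ck s sm s0 sp M : ℝ)
    (hM : 1 ≤ M) (htM : |t| ≤ M)
    (hsm : |sm| ≤ 1) (hs0 : |s0| ≤ 1) (hsp : |sp| ≤ 1)
    (hS : |S| ≤ 1) (hCk : |Ck| ≤ 1) (hs : |s| ≤ 1) (hn : 1 ≤ |n|) :
    |n * (Ck * (2 * s ^ 2 + s * (sm - sp) + (s + (sm - s0)) * (t - sp)
                  - (s + (s0 - sp)) * (t - sm))
            - 2 * S * s * s0 * (t - s0) + 4 * S * s0 * s * (2 * t - sm - sp))
        + 4 * S * s0 * ((t - sm) * (t - sp) - s ^ 2 + s * (sp - sm))|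
      ≤ 64 * M ^ 2 * |n| := by
  have c2 : |(2:ℝ)| ≤ 2 := by norm_num
  have c4 : |(4:ℝ)| ≤ 4 := by norm_num
  have hss : |s ^ 2| ≤ 1 * 1 := by rw [sq]; exact abs_mul_le' hs hs
  have p1 : |2 * s ^ 2| ≤ 2 * (1 * 1) := abs_mul_le' c2 hss
  have p2 : |s * (sm - sp)| ≤ 1 * (1 + 1) := abs_mul_le' hs (abs_sub_le'' hsm hsp)
  have p3 : |(s + (sm - s0)) * (t - sp)| ≤ (1 + (1 + 1)) * (M + 1) :=
    abs_mul_le' (abs_add_le' hs (abs_sub_le'' hsm hs0)) (abs_sub_le'' htM hsp)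
  have p4 : |(s + (s0 - sp)) * (t - sm)| ≤ (1 + (1 + 1)) * (M + 1) :=
    abs_mul_le' (abs_add_le' hs (abs_sub_le'' hs0 hsp)) (abs_sub_le'' htM hsm)
  have hX := abs_sub_le'' (abs_add_le' (abs_add_le' p1 p2) p3) p4
  have q1 := abs_mul_le' hCk hX
  have q2 : |2 * S * s * s0 * (t - s0)| ≤ 2 * 1 * 1 * 1 * (M + 1) :=
    abs_mul_le' (abs_mul_le' (abs_mul_le' (abs_mul_le' c2 hS) hs) hs0) (abs_sub_le'' htM hs0)
  have q3 : |4 * S * s0 * s * (2 * t - sm - sp)| ≤ 4 * 1 * 1 * 1 * (2 * M + 1 + 1) :=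
    abs_mul_le' (abs_mul_le' (abs_mul_le' (abs_mul_le' c4 hS) hs0) hs)
      (abs_sub_le'' (abs_sub_le'' (abs_mul_le' c2 htM) hsm) hsp)
  have hR1 := abs_add_le' (abs_sub_le'' q1 q2) q3
  have r1 : |(t - sm) * (t - sp)| ≤ (M + 1) * (M + 1) :=
    abs_mul_le' (abs_sub_le'' htM hsm) (abs_sub_le'' htM hsp)
  have r2 := abs_add_le' (abs_sub_le'' r1 hss) (abs_mul_le' hs (abs_sub_le'' hsp hsm))
  have hR0 := abs_mul_le' (abs_mul_le' (abs_mul_le' c4 hS) hs0) r2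
  have total := abs_add_le' (abs_mul_le' (le_refl |n|) hR1) hR0
  refine total.trans ?_
  have hA : 0 ≤ M ^ 2 * (|n| - 1) := mul_nonneg (by nlinarith) (by linarith)
  have hB : 0 ≤ (M * (M - 1)) * |n| := mul_nonneg (by nlinarith) (by linarith)
  have hC : 0 ≤ (M - 1) * |n| := mul_nonneg (by linarith) (by linarith)
  have hD : 0 ≤ (M - 1) * M := mul_nonneg (by linarith) (by linarith)
  norm_num
  nlinarith [hA, hB, hC, hD, hM]

set_option maxHeartbeats 2000000 in
/-- Asymptotic expansion of the Wigner–von Neumann type potential: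
`V(n) = −4 sin(k) sin(2kn)/n + O(n⁻²)`. -/
theorem wigner_von_neumann_potential_asymptotics
    (k t : ℝ) (hk : k ∈ Set.Ioo (0 : ℝ) Real.pi) (hsin : Real.sin (2 * k) ≠ 0)
    (g V : ℤ → ℝ)
    (hg : ∀ n : ℤ, g n = Real.sin (2 * k) * (n : ℝ) - Real.sin (2 * k * (n : ℝ)))
    (ht : ∀ n : ℤ, t + g n ≠ 0)
    (hVdef : ∀ n : ℤ, V n =
      Real.cos k * ((g n - g (n - 1)) / (t + g (n - 1))
          - (g (n + 1) - g n) / (t + g (n + 1)))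
        - 2 * Real.sin k * Real.sin (2 * k) * Real.sin (2 * k * (n : ℝ)) * (t + g n)
          / ((t + g (n - 1)) * (t + g (n + 1)))) :
    ∃ C > (0 : ℝ), ∀ n : ℤ, n ≠ 0 →
      |V n + 4 * Real.sin k * Real.sin (2 * k * (n : ℝ)) / (n : ℝ)| ≤ C / (n : ℝ) ^ 2 := by
  have hs2 : Real.sin (2 * k) = 2 * Real.sin k * Real.cos k := Real.sin_two_mul k
  have habs_s : |Real.sin (2 * k)| ≤ 1 := Real.abs_sin_le_one _
  have habs_S : |Real.sin k| ≤ 1 := Real.abs_sin_le_one _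
  have habs_Ck : |Real.cos k| ≤ 1 := Real.abs_cos_le_one _
  have hspos : 0 < |Real.sin (2 * k)| := abs_pos.mpr hsin
  set M : ℝ := |t| + 1 with hM_def
  have hM1 : 1 ≤ M := by rw [hM_def]; linarith [abs_nonneg t]
  have htM : |t| ≤ M := by simp [hM_def]
  set N : ℕ := ⌈4 * M / |Real.sin (2 * k)| + 2⌉₊ with hN_def
  have hne : (Finset.Icc (-(N:ℤ)) (N:ℤ)).Nonempty := ⟨0, by simp⟩
  set F : ℤ → ℝ := fun m : ℤ =>
    |V m + 4 * Real.sin k * Real.sin (2 * k * (m : ℝ)) / (m : ℝ)| * (m : ℝ) ^ 2 with hF_def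
  set C0 := (Finset.Icc (-(N:ℤ)) (N:ℤ)).sup' hne F with hC0_def
  have hC0 : 0 ≤ C0 := by
    have h0 : (0:ℤ) ∈ Finset.Icc (-(N:ℤ)) (N:ℤ) := by simp
    have hle := Finset.le_sup' F h0
    refine le_trans ?_ hle
    simp [hF_def]
  have hCbig : 0 ≤ 1024 * M ^ 2 / Real.sin (2 * k) ^ 2 := by positivity
  refine ⟨1024 * M ^ 2 / Real.sin (2 * k) ^ 2 + C0 + 1, by linarith, ?_⟩
  intro n hn0
  have hnR : ((n:ℝ)) ≠ 0 := Int.cast_ne_zero.mpr hn0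
  have hn2 : (0:ℝ) < (n:ℝ) ^ 2 := by positivity
  have h1nZ : (1:ℤ) ≤ |n| := Int.one_le_abs hn0
  have h1n : (1:ℝ) ≤ |(n:ℝ)| := by exact_mod_cast (by push_cast [← Int.cast_abs] at *; exact_mod_cast h1nZ : (1:ℝ) ≤ ((|n| : ℤ) : ℝ))
  have hnpos : (0:ℝ) < |(n:ℝ)| := lt_of_lt_of_le one_pos h1n
  by_cases hcase : 4 * M / |Real.sin (2 * k)| + 2 ≤ |(n:ℝ)|
  · -- large |n|
    set s := Real.sin (2 * k)
    set sm := Real.sin (2 * k * ((n:ℝ) - 1))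
    set s0 := Real.sin (2 * k * (n:ℝ))
    set sp := Real.sin (2 * k * ((n:ℝ) + 1))
    have hrel : sm + sp = 2 * s0 * (1 - 2 * Real.sin k ^ 2) := by
      have hcos2 : Real.cos (2 * k) = 1 - 2 * Real.sin k ^ 2 := by
        rw [Real.cos_two_mul]
        nlinarith [Real.sin_sq_add_cos_sq k]
      simp only [show 2 * k * ((n:ℝ) - 1) = 2 * k * (n:ℝ) - 2 * k by ring,
        show 2 * k * ((n:ℝ) + 1) = 2 * k * (n:ℝ) + 2 * k by ring, sm, sp, s0]
      rw [Real.sin_sub, Real.sin_add, ← hcos2]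
      ring
    have hm' : t + (s * ((n:ℝ) - 1) - sm) ≠ 0 := by
      intro h
      exact ht (n - 1) (by rw [hg (n - 1)]; push_cast; linarith)
    have hp' : t + (s * ((n:ℝ) + 1) - sp) ≠ 0 := by
      intro h
      exact ht (n + 1) (by rw [hg (n + 1)]; push_cast; linarith)
    have hE : V n + 4 * Real.sin k * Real.sin (2 * k * (n : ℝ)) / (n : ℝ)
        = Real.cos k * ((s * (n:ℝ) - s0 - (s * ((n:ℝ) - 1) - sm)) / (t + (s * ((n:ℝ) - 1) - sm))
            - (s * ((n:ℝ) + 1) - sp - (s * (n:ℝ) - s0)) / (t + (s * ((n:ℝ) + 1) - sp)))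
          - 2 * Real.sin k * s * s0 * (t + (s * (n:ℝ) - s0))
              / ((t + (s * ((n:ℝ) - 1) - sm)) * (t + (s * ((n:ℝ) + 1) - sp)))
          + 4 * Real.sin k * s0 / (n:ℝ) := by
      rw [hVdef n, hg n, hg (n - 1), hg (n + 1)]
      push_cast
      ring
    rw [hE, key_identity (n:ℝ) t (Real.sin k) (Real.cos k) s sm s0 sp hs2 hrel hnR hm' hp']
    rw [abs_div]
    have hnum := num_bound (n:ℝ) t (Real.sin k) (Real.cos k) s sm s0 sp M hM1 htM
      (Real.abs_sin_le_one _) (Real.abs_sin_le_one _) (Real.abs_sin_le_one _)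
      habs_S habs_Ck habs_s h1n
    -- lower bounds for the denominators
    have hsu : 4 * M + 2 * |s| ≤ |s| * |(n:ℝ)| := by
      have h1 := mul_le_mul_of_nonneg_left hcase (le_of_lt hspos)
      have h2 : |s| * (4 * M / |s|) = 4 * M := by field_simp
      nlinarith [h1, h2]
    have htm : |t - sm| ≤ M := by
      have := abs_sub_le'' (le_refl |t|) (Real.abs_sin_le_one (2 * k * ((n:ℝ) - 1)))
      simpa [hM_def] using this
    have htp : |t - sp| ≤ M := by
      have := abs_sub_le'' (le_refl |t|) (Real.abs_sin_le_one (2 * k * ((n:ℝ) + 1)))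
      simpa [hM_def] using this
    have hdm : |s| * |(n:ℝ)| / 4 ≤ |t + (s * ((n:ℝ) - 1) - sm)| := by
      have key := abs_sub_abs_le_abs_sub (s * ((n:ℝ) - 1)) (-(t - sm))
      rw [abs_neg, sub_neg_eq_add] at key
      rw [show s * ((n:ℝ) - 1) + (t - sm) = t + (s * ((n:ℝ) - 1) - sm) by ring] at key
      rw [abs_mul] at key
      have habs1 : |(n:ℝ)| - 1 ≤ |(n:ℝ) - 1| := by
        have := abs_sub_abs_le_abs_sub (n:ℝ) 1
        simpa using this
      have hprod : |s| * (|(n:ℝ)| - 1) ≤ |s| * |(n:ℝ) - 1| :=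
        mul_le_mul_of_nonneg_left habs1 (abs_nonneg s)
      linarith [key, hprod, htm, hsu, hM1, hspos, abs_nonneg s]
    have hdp : |s| * |(n:ℝ)| / 4 ≤ |t + (s * ((n:ℝ) + 1) - sp)| := by
      have key := abs_sub_abs_le_abs_sub (s * ((n:ℝ) + 1)) (-(t - sp))
      rw [abs_neg, sub_neg_eq_add] at key
      rw [show s * ((n:ℝ) + 1) + (t - sp) = t + (s * ((n:ℝ) + 1) - sp) by ring] at key
      rw [abs_mul] at key
      have habs1 : |(n:ℝ)| - 1 ≤ |(n:ℝ) + 1| := by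
        have := abs_sub_abs_le_abs_sub (n:ℝ) (-1)
        simp only [abs_neg, abs_one, sub_neg_eq_add] at this
        linarith
      have hprod : |s| * (|(n:ℝ)| - 1) ≤ |s| * |(n:ℝ) + 1| :=
        mul_le_mul_of_nonneg_left habs1 (abs_nonneg s)
      linarith [key, hprod, htp, hsu, hM1, hspos, abs_nonneg s]
    have hq : (0:ℝ) < |s| * |(n:ℝ)| / 4 := by
      apply div_pos (mul_pos hspos hnpos); norm_num
    have hden_pos : (0:ℝ) < |(n:ℝ)| * ((|s| * |(n:ℝ)| / 4) * (|s| * |(n:ℝ)| / 4)) :=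
      mul_pos hnpos (mul_pos hq hq)
    have hden_le : |(n:ℝ)| * ((|s| * |(n:ℝ)| / 4) * (|s| * |(n:ℝ)| / 4))
        ≤ |(n:ℝ) * ((t + (s * ((n:ℝ) - 1) - sm)) * (t + (s * ((n:ℝ) + 1) - sp)))| := by
      rw [abs_mul, abs_mul]
      exact mul_le_mul_of_nonneg_left
        (mul_le_mul hdm hdp (le_of_lt hq) (abs_nonneg _)) (abs_nonneg _)
    have step := div_le_div₀ (by positivity) hnum hden_pos hden_le
    refine step.trans ?_
    have habsne : |(n:ℝ)| ≠ 0 := ne_of_gt hnpos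
    have heq : 64 * M ^ 2 * |(n:ℝ)| / (|(n:ℝ)| * ((|s| * |(n:ℝ)| / 4) * (|s| * |(n:ℝ)| / 4)))
        = 1024 * M ^ 2 / s ^ 2 / (n:ℝ) ^ 2 := by
      have hden_eq : |(n:ℝ)| * ((|s| * |(n:ℝ)| / 4) * (|s| * |(n:ℝ)| / 4))
          = s ^ 2 * ((n:ℝ) ^ 2 * |(n:ℝ)|) / 16 := by
        rw [show |s| * |(n:ℝ)| / 4 * (|s| * |(n:ℝ)| / 4) = |s| ^ 2 * |(n:ℝ)| ^ 2 / 16 by ring,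
          sq_abs, sq_abs]
        ring
      rw [hden_eq]
      field_simp
      ring
    rw [heq]
    exact (div_le_div_iff_of_pos_right hn2).mpr (by linarith)
  · -- small |n|
    have hmem : n ∈ Finset.Icc (-(N:ℤ)) (N:ℤ) := by
      have h1 : |(n:ℝ)| ≤ (N:ℝ) := le_trans (le_of_not_ge hcase) (Nat.le_ceil _)
      have h2 : |n| ≤ (N:ℤ) := by exact_mod_cast (by rwa [← Int.cast_abs] at h1 : ((|n| : ℤ) : ℝ) ≤ ((N:ℤ) : ℝ))
      exact Finset.mem_Icc.mpr ⟨(abs_le.mp h2).1, (abs_le.mp h2).2⟩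
    have hle : F n ≤ C0 := Finset.le_sup' F hmem
    have hFn : F n = |V n + 4 * Real.sin k * Real.sin (2 * k * (n : ℝ)) / (n : ℝ)| * (n : ℝ) ^ 2 := rfl
    rw [le_div_iff₀ hn2]
    calc |V n + 4 * Real.sin k * Real.sin (2 * k * (n : ℝ)) / (n : ℝ)| * (n:ℝ) ^ 2
        = F n := hFn.symm
      _ ≤ C0 := hle
      _ ≤ 1024 * M ^ 2 / Real.sin (2 * k) ^ 2 + C0 + 1 := by linarith
end

section
/- Let d = 1. For every finitely supported u ∈ ℓ²(ℤ): |N|·(2 − S² − (S^*)²) u = [ (S − S^*)|N|(S^* − S) − P₀(2 − S² − (S^*)²) − σ(S² − (S^*)²) ] u, where |N| is multiplication by |n|, P₀ is the orthogonal projection onto the coordinate 0, and σ is multiplication by sign(n) with sign(0) := 0. -/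
/-- The identity
`|N|(2 − S² − (S*)²) = (S − S*)|N|(S* − S) − P₀(2 − S² − (S*)²) − sign(N)(S² − (S*)²)`
on finitely supported sequences (relation (5.20) of the paper), written pointwise.
Here `(S − S*)|N|(S* − S)u(n) = w(n−1) − w(n+1)` with `w(m) = |m|(u(m+1) − u(m−1))`. -/
theorem absN_laplacian_identity
    (u : ℤ → ℂ) (hu : (Function.support u).Finite) :
    ∀ n : ℤ,
      ((|(n : ℝ)| : ℝ) : ℂ) * (2 * u n - u (n - 2) - u (n + 2))
        = (((|(n : ℝ) - 1| : ℝ) : ℂ) * (u n - u (n - 2))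
            - ((|(n : ℝ) + 1| : ℝ) : ℂ) * (u (n + 2) - u n))
          - (if n = 0 then 2 * u 0 - u (-2) - u 2 else 0)
          - (Int.sign n : ℂ) * (u (n - 2) - u (n + 2)) := by
  intro n
  rcases lt_trichotomy n 0 with h | h | h
  · have hn : (n : ℝ) < 0 := by exact_mod_cast h
    have h1 : |(n : ℝ)| = -n := abs_of_neg hn
    have h2 : |(n : ℝ) - 1| = -((n : ℝ) - 1) := abs_of_neg (by linarith)
    have h3 : |(n : ℝ) + 1| = -((n : ℝ) + 1) :=
      abs_of_nonpos (by
        have : (n : ℝ) ≤ -1 := by exact_mod_cast (by omega : n ≤ -1)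
        linarith)
    rw [h1, h2, h3, Int.sign_eq_neg_one_of_neg h, if_neg h.ne]
    push_cast
    ring
  · subst h
    simp
    ring
  · have hn : (0 : ℝ) < n := by exact_mod_cast h
    have h1 : |(n : ℝ)| = n := abs_of_pos hn
    have h2 : |(n : ℝ) - 1| = (n : ℝ) - 1 :=
      abs_of_nonneg (by
        have : (1 : ℝ) ≤ n := by exact_mod_cast (by omega : 1 ≤ n)
        linarith)
    have h3 : |(n : ℝ) + 1| = (n : ℝ) + 1 := abs_of_pos (by linarith)
    rw [h1, h2, h3, Int.sign_eq_one_of_pos h, if_neg h.ne']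
    push_cast
    ring
end

section
/- Fix α₁ ≥ 0. For s > 0 and γ ∈ (0,1], let Υ_s(x) := ∫₀^x (1+s²t²)^{−1} dt, F_s(x) := α₁x + γΥ_s(x), ⟨n⟩ := √(1+n²), and φ_ℓ(n) := e^{F_s(⟨n−1⟩) − F_s(⟨n⟩)} − 1 for n ∈ ℤ. Then there exists a constant c > 0 depending only on α₁ such that for all s > 0, all γ ∈ (0,1] and all n ∈ ℤ: |φ_ℓ(n+1) − φ_ℓ(n)| ≤ c( ⟨n⟩^{−3} + γ⟨n⟩^{−1} ). -/
noncomputable section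

/-- The interpolating function `Υ_s(x) = ∫₀ˣ (1 + s²t²)⁻¹ dt`. -/
def Ups (s x : ℝ) : ℝ := ∫ t in (0:ℝ)..x, (1 + s ^ 2 * t ^ 2)⁻¹

/-- The weight `F_s(x) = α₁x + γΥ_s(x)`. -/
def Fs (α₁ s γ x : ℝ) : ℝ := α₁ * x + γ * Ups s x

/-- `⟨n⟩ = √(1 + n²)` on `ℤ`. -/
def angBr (n : ℤ) : ℝ := Real.sqrt (1 + (n : ℝ) ^ 2)

/-- `φ_ℓ(n) = e^{F_s(⟨n−1⟩) − F_s(⟨n⟩)} − 1`. -/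
def phiL (α₁ s γ : ℝ) (n : ℤ) : ℝ :=
  Real.exp (Fs α₁ s γ (angBr (n - 1)) - Fs α₁ s γ (angBr n)) - 1

/-! ### Auxiliary definitions and lemmas -/

/-- Real-variable version of `⟨·⟩`. -/
def fR (x : ℝ) : ℝ := Real.sqrt (1 + x ^ 2)

lemma fR_pos (x : ℝ) : 0 < fR x := Real.sqrt_pos.2 (by positivity)

lemma fR_sq (x : ℝ) : fR x ^ 2 = 1 + x ^ 2 := Real.sq_sqrt (by positivity)

lemma one_le_fR (x : ℝ) : 1 ≤ fR x := by
  nlinarith [fR_pos x, fR_sq x, sq_nonneg x]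

lemma abs_le_fR (x : ℝ) : |x| ≤ fR x := by
  nlinarith [fR_pos x, fR_sq x, abs_nonneg x, sq_abs x]

lemma fR_lip (a b : ℝ) : |fR a - fR b| ≤ |a - b| := by
  have h : ∀ u v : ℝ, fR u - fR v ≤ |u - v| := by
    intro u v
    have h1 : v * (u - v) ≤ fR v * |u - v| := by
      calc v * (u - v) ≤ |v * (u - v)| := le_abs_self _
        _ = |v| * |u - v| := abs_mul _ _
        _ ≤ fR v * |u - v| := mul_le_mul_of_nonneg_right (abs_le_fR v) (abs_nonneg _)
    nlinarith [fR_sq u, fR_sq v, fR_pos u, fR_pos v, abs_nonneg (u - v), sq_abs (u - v)]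
  rw [abs_sub_le_iff]
  exact ⟨h a b, by rw [abs_sub_comm]; exact h b a⟩

lemma hasDerivAt_fR (x : ℝ) : HasDerivAt fR (x / fR x) x := by
  have h1 : HasDerivAt (fun x : ℝ => 1 + x ^ 2) (2 * x) x := by
    simpa using (hasDerivAt_pow 2 x).const_add 1
  have h2 := (Real.hasDerivAt_sqrt (x := 1 + x ^ 2) (by positivity)).comp x h1
  refine HasDerivAt.congr_deriv h2 ?_
  symm
  have := fR_pos x
  unfold fR at this ⊢
  field_simp

lemma hasDerivAt_Ups (s x : ℝ) : HasDerivAt (Ups s) ((1 + s ^ 2 * x ^ 2)⁻¹) x := by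
  have hc : Continuous fun t : ℝ => (1 + s ^ 2 * t ^ 2)⁻¹ :=
    Continuous.inv₀ (by continuity) (fun t => by positivity)
  exact intervalIntegral.integral_hasDerivAt_right (hc.intervalIntegrable _ _)
    (hc.stronglyMeasurableAtFilter _ _) hc.continuousAt

/-- `qq s x = Υ_s'(⟨x⟩)`. -/
def qq (s x : ℝ) : ℝ := (1 + s ^ 2 * (1 + x ^ 2))⁻¹

/-- First derivative of `x ↦ F_s(⟨x⟩)`. -/
def Hd1 (α₁ s γ x : ℝ) : ℝ := (α₁ + γ * qq s x) * (x / fR x)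

/-- Second derivative of `x ↦ F_s(⟨x⟩)`. -/
def Hd2 (α₁ s γ x : ℝ) : ℝ :=
  γ * (-(s ^ 2 * (2 * x)) / (1 + s ^ 2 * (1 + x ^ 2)) ^ 2) * (x / fR x)
    + (α₁ + γ * qq s x) * (fR x ^ 3)⁻¹

lemma hasDerivAt_H (α₁ s γ x : ℝ) :
    HasDerivAt (fun y => Fs α₁ s γ (fR y)) (Hd1 α₁ s γ x) x := by
  have h1 := hasDerivAt_fR x
  have h2 := (hasDerivAt_Ups s (fR x)).comp x h1
  have h3 := (h1.const_mul α₁).add (h2.const_mul γ)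
  have he : Hd1 α₁ s γ x
      = α₁ * (x / fR x) + γ * ((1 + s ^ 2 * fR x ^ 2)⁻¹ * (x / fR x)) := by
    rw [fR_sq, Hd1, qq]; ring
  rw [he]
  exact h3

lemma hasDerivAt_Hd1 (α₁ s γ x : ℝ) :
    HasDerivAt (Hd1 α₁ s γ) (Hd2 α₁ s γ x) x := by
  have hq : HasDerivAt (fun y => qq s y)
      (-(s ^ 2 * (2 * x)) / (1 + s ^ 2 * (1 + x ^ 2)) ^ 2) x := by
    have hinner : HasDerivAt (fun y : ℝ => 1 + s ^ 2 * (1 + y ^ 2)) (s ^ 2 * (2 * x)) x := by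
      have h0 : HasDerivAt (fun y : ℝ => 1 + y ^ 2) (2 * x) x := by
        simpa using (hasDerivAt_pow 2 x).const_add 1
      simpa using (h0.const_mul (s ^ 2)).const_add 1
    exact hinner.inv (by positivity)
  have hdiv : HasDerivAt (fun y => y / fR y) ((fR x ^ 3)⁻¹) x := by
    have h := (hasDerivAt_id x).div (hasDerivAt_fR x) (ne_of_gt (fR_pos x))
    refine HasDerivAt.congr_deriv h ?_
    symm
    have h2 := fR_sq x
    have hne := (fR_pos x).ne'
    simp only [id]
    field_simp
    linear_combination -h2
  have h := (((hq.const_mul γ).const_add α₁).mul hdiv)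
  exact h

lemma qq_mem (s x : ℝ) : 0 < qq s x ∧ qq s x ≤ 1 := by
  constructor
  · rw [qq]; positivity
  · rw [qq]
    rw [inv_le_one_iff₀]
    right; nlinarith [sq_nonneg s, sq_nonneg x, sq_nonneg (s*x)]

lemma abs_ratio_le (x : ℝ) : |x / fR x| ≤ 1 := by
  rw [abs_div, abs_of_pos (fR_pos x)]
  exact div_le_one_of_le₀ (abs_le_fR x) (fR_pos x).le

lemma abs_Hd1_le {α₁ γ : ℝ} (hα : 0 ≤ α₁) (hγ0 : 0 ≤ γ) (hγ1 : γ ≤ 1) (s x : ℝ) :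
    |Hd1 α₁ s γ x| ≤ α₁ + 1 := by
  obtain ⟨hq0, hq1⟩ := qq_mem s x
  rw [Hd1, abs_mul]
  calc |α₁ + γ * qq s x| * |x / fR x| ≤ (α₁ + 1) * 1 := by
        apply mul_le_mul _ (abs_ratio_le x) (abs_nonneg _) (by linarith)
        rw [abs_of_nonneg (by nlinarith)]
        nlinarith
    _ = α₁ + 1 := mul_one _

lemma abs_Hd2_le {α₁ γ : ℝ} (hα : 0 ≤ α₁) (hγ0 : 0 ≤ γ) (hγ1 : γ ≤ 1) (s x : ℝ) :
    |Hd2 α₁ s γ x| ≤ (α₁ + 1) * (fR x ^ 3)⁻¹ + γ * (fR x)⁻¹ := by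
  obtain ⟨hq0, hq1⟩ := qq_mem s x
  have hF := fR_pos x
  have hF2 := fR_sq x
  have hD : (0:ℝ) < 1 + s ^ 2 * (1 + x ^ 2) := by positivity
  rw [Hd2]
  have h1 : |γ * (-(s ^ 2 * (2 * x)) / (1 + s ^ 2 * (1 + x ^ 2)) ^ 2) * (x / fR x)|
      ≤ γ * (fR x)⁻¹ := by
    have e : γ * (-(s ^ 2 * (2 * x)) / (1 + s ^ 2 * (1 + x ^ 2)) ^ 2) * (x / fR x)
        = -(γ * ((2 * s ^ 2 * x ^ 2) / ((1 + s ^ 2 * (1 + x ^ 2)) ^ 2 * fR x))) := by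
      field_simp
    rw [e, abs_neg, abs_of_nonneg (by positivity)]
    apply mul_le_mul_of_nonneg_left _ hγ0
    rw [div_le_iff₀ (by positivity)]
    have e2 : (fR x)⁻¹ * ((1 + s ^ 2 * (1 + x ^ 2)) ^ 2 * fR x)
        = (1 + s ^ 2 * (1 + x ^ 2)) ^ 2 := by field_simp
    rw [e2]
    nlinarith [sq_nonneg (s * x), sq_nonneg s, sq_nonneg (s ^ 2 * (1 + x ^ 2)), sq_nonneg x]
  have h2 : |(α₁ + γ * qq s x) * (fR x ^ 3)⁻¹| ≤ (α₁ + 1) * (fR x ^ 3)⁻¹ := by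
    rw [abs_mul, abs_of_pos (by positivity : (0:ℝ) < (fR x ^ 3)⁻¹),
      abs_of_nonneg (by nlinarith)]
    apply mul_le_mul_of_nonneg_right (by nlinarith) (by positivity)
  calc |_ + _| ≤ _ := abs_add_le _ _
    _ ≤ (α₁ + 1) * (fR x ^ 3)⁻¹ + γ * (fR x)⁻¹ := by linarith

lemma exp_diff_le {a b M : ℝ} (ha : a ≤ M) (hb : b ≤ M) :
    |Real.exp a - Real.exp b| ≤ Real.exp M * |a - b| := by
  wlog h : b ≤ a generalizing a b
  · rw [abs_sub_comm, abs_sub_comm a b]; exact this hb ha (le_of_not_ge h)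
  rw [abs_of_nonneg (sub_nonneg.2 (Real.exp_le_exp.2 h)), abs_of_nonneg (sub_nonneg.2 h)]
  have h1 : Real.exp a * (1 + (b - a)) ≤ Real.exp b := by
    calc Real.exp a * (1 + (b - a)) ≤ Real.exp a * Real.exp (b - a) := by
          apply mul_le_mul_of_nonneg_left _ (Real.exp_pos a).le
          have := Real.add_one_le_exp (b - a); linarith
      _ = Real.exp b := by rw [← Real.exp_add]; ring_nf
  have h2 : Real.exp a ≤ Real.exp M := Real.exp_le_exp.2 ha
  nlinarith [Real.exp_pos a, sub_nonneg.2 h]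

lemma second_diff (H H' H'' : ℝ → ℝ) (hH : ∀ x, HasDerivAt H (H' x) x)
    (hH' : ∀ x, HasDerivAt H' (H'' x) x) (c : ℝ) :
    ∃ ξ ∈ Set.Ioo (c - 1) (c + 1), H (c + 1) - 2 * H c + H (c - 1) = H'' ξ := by
  have hcont : Continuous H := by
    rw [continuous_iff_continuousAt]; exact fun x => (hH x).continuousAt
  have hcont' : Continuous H' := by
    rw [continuous_iff_continuousAt]; exact fun x => (hH' x).continuousAt
  have hG : ∀ x : ℝ, HasDerivAt (fun y => H (y + 1) - H y) (H' (x + 1) - H' x) x := by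
    intro x
    have h1 : HasDerivAt (fun y : ℝ => H (y + 1)) (H' (x + 1)) x := by
      have := (hH (x + 1)).comp x ((hasDerivAt_id x).add_const 1)
      exact this.congr_deriv (mul_one _)
    exact h1.sub (hH x)
  obtain ⟨η, hη, hηeq⟩ := exists_hasDerivAt_eq_slope (fun y => H (y + 1) - H y)
    (fun x => H' (x + 1) - H' x) (by linarith : c - 1 < c)
    (Continuous.continuousOn (by continuity)) (fun x _ => hG x)
  obtain ⟨ξ, hξ, hξeq⟩ := exists_hasDerivAt_eq_slope H' H''
    (by linarith : η < η + 1) hcont'.continuousOn (fun x _ => hH' x)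
  refine ⟨ξ, ⟨by cases hη; cases hξ; linarith, by cases hη; cases hξ; linarith⟩, ?_⟩
  rw [hξeq, hηeq]
  have : c - 1 + 1 = c := by ring
  rw [this]
  field_simp
  ring

lemma first_diff (H H' : ℝ → ℝ) (hH : ∀ x, HasDerivAt H (H' x) x)
    {M : ℝ} (hM : ∀ x, |H' x| ≤ M) (c : ℝ) : |H (c + 1) - H c| ≤ M := by
  obtain ⟨t, _, ht⟩ := exists_hasDerivAt_eq_slope H H' (by linarith : c < c + 1)
    (Continuous.continuousOn (by
      rw [continuous_iff_continuousAt]; exact fun x => (hH x).continuousAt))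
    (fun x _ => hH x)
  have : H (c + 1) - H c = H' t := by
    rw [ht]; field_simp; ring
  rw [this]; exact hM t

/-- Uniform estimate (Part 1 of the proof of Theorem 1.2):
`|φ_ℓ(n+1) − φ_ℓ(n)| ≤ c(⟨n⟩⁻³ + γ⟨n⟩⁻¹)` with `c` depending only on `α₁`. -/
theorem phiL_difference_estimate (α₁ : ℝ) (hα₁ : 0 ≤ α₁) :
    ∃ c > (0 : ℝ), ∀ s : ℝ, 0 < s → ∀ γ ∈ Set.Ioc (0 : ℝ) 1, ∀ n : ℤ,
      |phiL α₁ s γ (n + 1) - phiL α₁ s γ n|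
        ≤ c * ((angBr n ^ 3)⁻¹ + γ * (angBr n)⁻¹) := by
  refine ⟨(8 * (α₁ + 1) + 2) * Real.exp (α₁ + 1), by positivity, ?_⟩
  intro s hs γ hγ n
  obtain ⟨hγ0, hγ1⟩ := hγ
  set cn := (n : ℝ) with hcn
  set HH := fun y => Fs α₁ s γ (fR y) with hHH
  have hd1 : ∀ x, HasDerivAt HH (Hd1 α₁ s γ x) x := hasDerivAt_H α₁ s γ
  have hd2 : ∀ x, HasDerivAt (Hd1 α₁ s γ) (Hd2 α₁ s γ x) x := hasDerivAt_Hd1 α₁ s γ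
  have hbnd : ∀ x, |Hd1 α₁ s γ x| ≤ α₁ + 1 := abs_Hd1_le hα₁ hγ0.le hγ1 s
  have e1 : angBr n = fR cn := by rw [angBr, fR]
  have e2 : angBr (n + 1) = fR (cn + 1) := by rw [angBr, fR]; congr 2; push_cast; ring
  have e3 : angBr (n - 1) = fR (cn - 1) := by rw [angBr, fR]; congr 2; push_cast; ring
  set A := HH cn - HH (cn + 1) with hA
  set B := HH (cn - 1) - HH cn with hB
  have hphi : phiL α₁ s γ (n + 1) - phiL α₁ s γ n = Real.exp A - Real.exp B := by
    rw [phiL, phiL, show n + 1 - 1 = n from by ring, e1, e2, e3]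
    ring
  have hAle : |A| ≤ α₁ + 1 := by
    rw [hA, abs_sub_comm]
    exact first_diff HH (Hd1 α₁ s γ) hd1 hbnd cn
  have hBle : |B| ≤ α₁ + 1 := by
    have h0 := first_diff HH (Hd1 α₁ s γ) hd1 hbnd (cn - 1)
    rw [show cn - 1 + 1 = cn from by ring] at h0
    rw [hB, abs_sub_comm]
    exact h0
  obtain ⟨ξ, hξ, hξeq⟩ := second_diff HH (Hd1 α₁ s γ) (Hd2 α₁ s γ) hd1 hd2 cn
  have hAB : |A - B| = |Hd2 α₁ s γ ξ| := by
    rw [show A - B = -(Hd2 α₁ s γ ξ) from by rw [hA, hB]; linarith [hξeq], abs_neg]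
  -- comparison of fR ξ and fR cn
  have hlc : fR cn ≤ 2 * fR ξ := by
    have h1 : |cn - ξ| ≤ 1 := abs_le.2 ⟨by linarith [hξ.2], by linarith [hξ.1]⟩
    have h2 := fR_lip cn ξ
    have h3 := le_abs_self (fR cn - fR ξ)
    have h4 := one_le_fR ξ
    linarith
  have i1 : (fR ξ)⁻¹ ≤ 2 * (fR cn)⁻¹ := by
    have h1 := fR_pos cn
    have h2 := fR_pos ξ
    rw [show (2:ℝ) * (fR cn)⁻¹ = (fR cn / 2)⁻¹ from by rw [inv_div]; ring]
    exact inv_anti₀ (by positivity) (by linarith)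
  have i3 : (fR ξ ^ 3)⁻¹ ≤ 8 * (fR cn ^ 3)⁻¹ := by
    have h1 := fR_pos cn
    have h2 := fR_pos ξ
    have h5 : fR cn ^ 3 ≤ 8 * fR ξ ^ 3 := by
      calc fR cn ^ 3 ≤ (2 * fR ξ) ^ 3 := pow_le_pow_left₀ h1.le hlc 3
        _ = 8 * fR ξ ^ 3 := by ring
    rw [show (8:ℝ) * (fR cn ^ 3)⁻¹ = (fR cn ^ 3 / 8)⁻¹ from by rw [inv_div]; ring]
    exact inv_anti₀ (by positivity) (by linarith)
  have key : |phiL α₁ s γ (n + 1) - phiL α₁ s γ n|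
      ≤ Real.exp (α₁ + 1) * ((α₁ + 1) * (8 * (fR cn ^ 3)⁻¹) + γ * (2 * (fR cn)⁻¹)) := by
    rw [hphi]
    calc |Real.exp A - Real.exp B|
        ≤ Real.exp (α₁ + 1) * |A - B| :=
          exp_diff_le (le_trans (le_abs_self A) hAle) (le_trans (le_abs_self B) hBle)
      _ = Real.exp (α₁ + 1) * |Hd2 α₁ s γ ξ| := by rw [hAB]
      _ ≤ Real.exp (α₁ + 1) * ((α₁ + 1) * (fR ξ ^ 3)⁻¹ + γ * (fR ξ)⁻¹) := by
          apply mul_le_mul_of_nonneg_left (abs_Hd2_le hα₁ hγ0.le hγ1 s ξ)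
            (Real.exp_pos _).le
      _ ≤ Real.exp (α₁ + 1) * ((α₁ + 1) * (8 * (fR cn ^ 3)⁻¹) + γ * (2 * (fR cn)⁻¹)) := by
          apply mul_le_mul_of_nonneg_left _ (Real.exp_pos _).le
          have := mul_le_mul_of_nonneg_left i3 (by linarith : (0:ℝ) ≤ α₁ + 1)
          have := mul_le_mul_of_nonneg_left i1 hγ0.le
          linarith
  rw [e1]
  refine le_trans key ?_
  have hX : (0:ℝ) < (fR cn ^ 3)⁻¹ := inv_pos.2 (pow_pos (fR_pos cn) 3)
  have hY : (0:ℝ) < (fR cn)⁻¹ := inv_pos.2 (fR_pos cn)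
  have hE : (0:ℝ) < Real.exp (α₁ + 1) := Real.exp_pos _
  nlinarith [mul_pos hE hX, mul_pos (mul_pos hγ0 hE) hY, mul_nonneg (mul_nonneg hα₁ hE.le) (mul_pos hγ0 hY).le]

end
end

section
/- Let d = 1, let V : ℤ → ℝ be bounded, and let α ≥ 0. Let F_α(n) := α|n|, c_α := e^{−α}/cosh(α) − 1, let P₀ be the orthogonal projection onto the coordinate 0, and let σ be multiplication by sign(n) (with sign(0) := 0). Then one has the bounded-operator identity on ℓ²(ℤ): (cosh α)^{−1} · e^{F_α}(Δ + V)e^{−F_α} = Δ + c_α P₀Δ + (cosh α)^{−1} V + 2((cosh α)^{−1} − 1)·Id − 2c_α P₀ + tanh(α)·σ(S^* − S), where e^{F_α}(Δ+V)e^{−F_α} denotes the bounded operator 2 + V − e^{F_α−τF_α}S − e^{F_α−τ^*F_α}S^* with (τF_α)(n) := α|n−1| and (τ^*F_α)(n) := α|n+1|, and P₀Δ means P₀ composed after Δ. -/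
/-- Part 2 of the proof of the second part of Theorem 1.2: exact expression for the
conjugated operator with weight `F_α(n) = α|n|`,
`(cosh α)⁻¹ e^{F_α}(Δ+V)e^{−F_α} = Δ + c_α P₀Δ + (cosh α)⁻¹V + 2((cosh α)⁻¹ − 1)
  − 2c_α P₀ + tanh(α) sign(N)(S* − S)`, written pointwise. -/
theorem weighted_conjugation_identity
    (V : ℤ → ℝ) (hV : ∃ M : ℝ, ∀ n, |V n| ≤ M) (α : ℝ) (hα : 0 ≤ α) :
    ∀ (u : ℤ → ℂ) (n : ℤ),
      ((Real.cosh α)⁻¹ : ℂ) *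
        (2 * u n + (V n : ℂ) * u n
          - (Real.exp (α * |(n : ℝ)| - α * |(n : ℝ) - 1|) : ℂ) * u (n - 1)
          - (Real.exp (α * |(n : ℝ)| - α * |(n : ℝ) + 1|) : ℂ) * u (n + 1))
      = (2 * u n - u (n + 1) - u (n - 1))
        + ((Real.exp (-α) / Real.cosh α - 1 : ℝ) : ℂ)
            * (if n = 0 then 2 * u 0 - u 1 - u (-1) else 0)
        + ((Real.cosh α)⁻¹ : ℂ) * (V n : ℂ) * u n
        + 2 * (((Real.cosh α)⁻¹ - 1 : ℝ) : ℂ) * u n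
        - 2 * ((Real.exp (-α) / Real.cosh α - 1 : ℝ) : ℂ) * (if n = 0 then u 0 else 0)
        + ((Real.tanh α : ℝ) : ℂ) * (Int.sign n : ℂ) * (u (n + 1) - u (n - 1)) := by
  intro u n
  have hc : Real.cosh α ≠ 0 := (Real.cosh_pos (x := α)).ne'
  have hc' : (Real.cosh α : ℂ) ≠ 0 := by exact_mod_cast hc
  have hE : Complex.exp (α : ℂ) = Complex.cosh α + Complex.sinh α :=
    (Complex.cosh_add_sinh _).symm
  have hEn : Complex.exp (-(α : ℂ)) = Complex.cosh (α : ℂ) - Complex.sinh (α : ℂ) := by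
    rw [← Complex.cosh_sub_sinh]
  have htanh : Real.tanh α = Real.sinh α / Real.cosh α := Real.tanh_eq_sinh_div_cosh α
  have hexp : Real.exp α = Real.cosh α + Real.sinh α := (Real.cosh_add_sinh α).symm
  have hexpn : Real.exp (-α) = Real.cosh α - Real.sinh α := (Real.cosh_sub_sinh α).symm
  rcases lt_trichotomy n 0 with h | h | h
  · -- n < 0
    have h1 : |(n : ℝ)| = -n := abs_of_neg (by exact_mod_cast h)
    have h2 : |(n : ℝ) - 1| = -((n : ℝ) - 1) := abs_of_neg (by
      have : (n : ℝ) < 0 := by exact_mod_cast h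
      linarith)
    have h3 : |(n : ℝ) + 1| = -((n : ℝ) + 1) := abs_of_nonpos (by
      have hn1 : n ≤ -1 := by omega
      have : (n : ℝ) ≤ -1 := by exact_mod_cast hn1
      linarith)
    have hs : (Int.sign n : ℂ) = -1 := by
      rw [Int.sign_eq_neg_one_of_neg h]; norm_num
    rw [h1, h2, h3, hs]
    have e1 : α * -(n : ℝ) - α * -((n : ℝ) - 1) = -α := by ring
    have e2 : α * -(n : ℝ) - α * -((n : ℝ) + 1) = α := by ring
    rw [e1, e2, hexp, hexpn, htanh]
    simp only [if_neg h.ne]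
    push_cast
    set C := Complex.cosh (α : ℂ) with hCdef
    set Sh := Complex.sinh (α : ℂ) with hSdef
    have hC : C ≠ 0 := by rw [hCdef, ← Complex.ofReal_cosh]; exact_mod_cast hc
    field_simp
    ring
  · -- n = 0
    subst h
    have h1 : |((0 : ℤ) : ℝ)| = 0 := by norm_num
    have h2 : |((0 : ℤ) : ℝ) - 1| = 1 := by norm_num
    have h3 : |((0 : ℤ) : ℝ) + 1| = 1 := by norm_num
    rw [h1, h2, h3]
    have e1 : α * 0 - α * 1 = -α := by ring
    rw [e1, hexpn]
    simp only [if_pos rfl, Int.sign_zero, Int.cast_zero]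
    push_cast
    set C := Complex.cosh (α : ℂ) with hCdef
    set Sh := Complex.sinh (α : ℂ) with hSdef
    have hC : C ≠ 0 := by rw [hCdef, ← Complex.ofReal_cosh]; exact_mod_cast hc
    field_simp
    ring
  · -- n > 0
    have h1 : |(n : ℝ)| = n := abs_of_pos (by exact_mod_cast h)
    have h2 : |(n : ℝ) - 1| = (n : ℝ) - 1 := abs_of_nonneg (by
      have : (1 : ℝ) ≤ n := by exact_mod_cast h
      linarith)
    have h3 : |(n : ℝ) + 1| = (n : ℝ) + 1 := abs_of_pos (by
      have : (0 : ℝ) < n := by exact_mod_cast h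
      linarith)
    have hs : (Int.sign n : ℂ) = 1 := by
      rw [Int.sign_eq_one_of_pos h]; norm_num
    rw [h1, h2, h3, hs]
    have e1 : α * (n : ℝ) - α * ((n : ℝ) - 1) = α := by ring
    have e2 : α * (n : ℝ) - α * ((n : ℝ) + 1) = -α := by ring
    rw [e1, e2, hexp, hexpn, htanh]
    simp only [if_neg h.ne']
    push_cast
    set C := Complex.cosh (α : ℂ) with hCdef
    set Sh := Complex.sinh (α : ℂ) with hSdef
    have hC : C ≠ 0 := by rw [hCdef, ← Complex.ofReal_cosh]; exact_mod_cast hc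
    field_simp
    ring
end
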